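/- arXiv:math/0603067 — 4 statements merged into one kernel-verified Lean document; each statement's English description precedes it below -/
import Mathlib

section
/- If Λ is a compactly aligned topological k-graph, U ⊆ Λ is relatively compact, and F ⊆ Λ is compact, then Z(U) ∩ Z(F)^c = Z(U) ∩ Z(cl(U) ∨ F)^c as subsets of the path space X_Λ. -/
open Set

namespace TKG

/-- A topological `k`-graph: a small category with objects `Obj` and morphisms `Mor`,
a degree functor `d : Mor → ℕ^k` satisfying the unique factorization property, with
second-countable locally compact Hausdorff topologies making the structure maps suitably
continuous, the source map a local homeomorphism and composition continuous and open. -/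
structure TopKGraph (k : ℕ) (Obj Mor : Type)
    [TopologicalSpace Obj] [TopologicalSpace Mor] where
  r : Mor → Obj
  s : Mor → Obj
  ident : Obj → Mor
  comp : ∀ f g : Mor, s f = r g → Mor
  d : Mor → Fin k → ℕ
  r_ident : ∀ v, r (ident v) = v
  s_ident : ∀ v, s (ident v) = v
  d_ident : ∀ v, d (ident v) = 0
  r_comp : ∀ f g h, r (comp f g h) = r f
  s_comp : ∀ f g h, s (comp f g h) = s g
  d_comp : ∀ f g h, d (comp f g h) = d f + d g
  ident_comp : ∀ (f : Mor) (h : s (ident (r f)) = r f), comp (ident (r f)) f h = f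
  comp_ident : ∀ (f : Mor) (h : s f = r (ident (s f))), comp f (ident (s f)) h = f
  comp_assoc : ∀ (f g h : Mor) (hfg : s f = r g) (hgh : s g = r h)
    (h1 : s (comp f g hfg) = r h) (h2 : s f = r (comp g h hgh)),
    comp (comp f g hfg) h h1 = comp f (comp g h hgh) h2
  factor : ∀ (f : Mor) (m n : Fin k → ℕ), d f = m + n →
    ∃! gh : Mor × Mor, ∃ h : s gh.1 = r gh.2,
      comp gh.1 gh.2 h = f ∧ d gh.1 = m ∧ d gh.2 = n
  secondCountableObj : SecondCountableTopology Obj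
  secondCountableMor : SecondCountableTopology Mor
  locallyCompactObj : LocallyCompactSpace Obj
  locallyCompactMor : LocallyCompactSpace Mor
  t2Obj : T2Space Obj
  t2Mor : T2Space Mor
  continuous_r : Continuous r
  continuous_s : Continuous s
  isLocalHomeomorph_s : IsLocalHomeomorph s
  continuous_comp : Continuous fun p : {p : Mor × Mor // s p.1 = r p.2} => comp p.1.1 p.1.2 p.2
  isOpenMap_comp : IsOpenMap fun p : {p : Mor × Mor // s p.1 = r p.2} => comp p.1.1 p.1.2 p.2
  continuous_d : Continuous d

variable {k : ℕ} {Obj Mor : Type} [TopologicalSpace Obj] [TopologicalSpace Mor]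

/-- `Λ^{min}(λ,μ)`: the pairs `(α,β)` with `λα = μβ` and `d(λα) = d(λ) ⊔ d(μ)`. -/
def MinExt (Λ : TopKGraph k Obj Mor) (l m : Mor) : Set (Mor × Mor) :=
  {ab | ∃ (h1 : Λ.s l = Λ.r ab.1) (h2 : Λ.s m = Λ.r ab.2),
      Λ.comp l ab.1 h1 = Λ.comp m ab.2 h2 ∧ Λ.d l + Λ.d ab.1 = Λ.d l ⊔ Λ.d m}

/-- `E ∨ F`: the set of minimal common extensions of paths from `E` and from `F`. -/
def MCE (Λ : TopKGraph k Obj Mor) (E F : Set Mor) : Set Mor :=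
  {f | ∃ l ∈ E, ∃ m ∈ F, Λ.d f = Λ.d l ⊔ Λ.d m ∧
        (∃ (a : Mor) (h : Λ.s l = Λ.r a), Λ.comp l a h = f) ∧
        (∃ (b : Mor) (h : Λ.s m = Λ.r b), Λ.comp m b h = f)}

/-- `Λ` is compactly aligned: `U ∨ V` is compact for all compact `U ⊆ Λ^p`, `V ⊆ Λ^q`. -/
def CompactlyAligned (Λ : TopKGraph k Obj Mor) : Prop :=
  ∀ (p q : Fin k → ℕ) (U V : Set Mor), U ⊆ {f | Λ.d f = p} → V ⊆ {f | Λ.d f = q} →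
    IsCompact U → IsCompact V → IsCompact (MCE Λ U V)

/-- `Λ` is finitely aligned: `Λ^{min}(λ,μ)` is finite for all `λ, μ`. -/
def FinitelyAligned (Λ : TopKGraph k Obj Mor) : Prop :=
  ∀ l m : Mor, (MinExt Λ l m).Finite

/-- An element of the path space `X_Λ`: a degree-preserving functor from `Ω_{k,m}` to `Λ`,
recorded by its degree `m ∈ (ℕ ∪ {∞})^k` and its segments `x(p,q)` for `p ≤ q ≤ m`
(with a fixed junk value outside the domain, so that paths are determined by their
segments on their domain). -/
structure KPath (Λ : TopKGraph k Obj Mor) where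
  deg : Fin k → ℕ∞
  seg : (Fin k → ℕ) → (Fin k → ℕ) → Mor
  seg_junk : ∀ p q, ¬(p ≤ q ∧ ∀ i, (q i : ℕ∞) ≤ deg i) → seg p q = seg 0 0
  d_seg : ∀ p q, p ≤ q → (∀ i, (q i : ℕ∞) ≤ deg i) → Λ.d (seg p q) = q - p
  seg_comp : ∀ p q u, p ≤ q → q ≤ u → (∀ i, (u i : ℕ∞) ≤ deg i) →
    ∃ h : Λ.s (seg p q) = Λ.r (seg q u), Λ.comp (seg p q) (seg q u) h = seg p u
  seg_ident : ∀ p, (∀ i, (p i : ℕ∞) ≤ deg i) → seg p p = Λ.ident (Λ.r (seg p p))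

variable {Λ : TopKGraph k Obj Mor}

/-- `q` is in the domain of the path `x`, i.e. `q ≤ d(x)`. -/
def KPath.dom (x : KPath Λ) (q : Fin k → ℕ) : Prop := ∀ i, (q i : ℕ∞) ≤ x.deg i

/-- The range vertex `r(x) = x(0)` of a path. -/
def KPath.rng (x : KPath Λ) : Obj := Λ.r (x.seg 0 0)

/-- The vertex `x(m)` of a path. -/
def KPath.vtx (x : KPath Λ) (m : Fin k → ℕ) : Obj := Λ.r (x.seg m m)

/-- `y = σ^m x`, the shift of `x` by `m ≤ d(x)`. -/
def IsShiftOf (m : Fin k → ℕ) (x y : KPath Λ) : Prop :=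
  (∀ i, (m i : ℕ∞) ≤ x.deg i) ∧ (∀ i, y.deg i = x.deg i - (m i : ℕ∞)) ∧
  ∀ p q, p ≤ q → (∀ i, (q i : ℕ∞) ≤ y.deg i) → y.seg p q = x.seg (m + p) (m + q)

/-- `y = λ x`, the concatenation of the morphism `λ` with the path `x` (so `s(λ) = r(x)`),
characterized by `d(y) = d(λ) + d(x)`, `y(0,p)` an initial segment of `λ` for `p ≤ d(λ)`,
and `y(0,p) = λ ⬝ x(0, p - d(λ))` for `d(λ) ≤ p ≤ d(y)`. -/
def IsConcatOf (l : Mor) (x y : KPath Λ) : Prop :=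
  Λ.s l = x.rng ∧ (∀ i, y.deg i = (Λ.d l i : ℕ∞) + x.deg i) ∧
  (∀ p, p ≤ Λ.d l →
    ∃ (a : Mor) (h : Λ.s (y.seg 0 p) = Λ.r a),
      Λ.d (y.seg 0 p) = p ∧ Λ.comp (y.seg 0 p) a h = l) ∧
  (∀ p, Λ.d l ≤ p → (∀ i, (p i : ℕ∞) ≤ y.deg i) →
    ∃ h : Λ.s l = Λ.r (x.seg 0 (p - Λ.d l)),
      y.seg 0 p = Λ.comp l (x.seg 0 (p - Λ.d l)) h)

/-- `E` is exhaustive for a set `V` of vertices. -/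
def Exhaustive (Λ : TopKGraph k Obj Mor) (V : Set Obj) (E : Set Mor) : Prop :=
  ∀ l : Mor, Λ.r l ∈ V → ∃ m ∈ E, (MinExt Λ l m).Nonempty

/-- `v CE(Λ)`: compact sets `E` with `r(E)` a neighbourhood of `v` and `E` exhaustive
for `r(E)`. -/
def CE (Λ : TopKGraph k Obj Mor) (v : Obj) : Set (Set Mor) :=
  {E | IsCompact E ∧ Λ.r '' E ∈ nhds v ∧ Exhaustive Λ (Λ.r '' E) E}

/-- `x` is a boundary path: for every `m ≤ d(x)` and every `E ∈ x(m)CE(Λ)` there is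
`λ ∈ E` with `x(m, m + d(λ)) = λ`. -/
def IsBoundary (x : KPath Λ) : Prop :=
  ∀ m : Fin k → ℕ, x.dom m → ∀ E ∈ CE Λ (x.vtx m),
    ∃ l ∈ E, x.dom (m + Λ.d l) ∧ x.seg m (m + Λ.d l) = l

/-- `Z(W)`: the set of paths with an initial segment in `W`. -/
def ZSet (Λ : TopKGraph k Obj Mor) (W : Set Mor) : Set (KPath Λ) :=
  {x | ∃ l ∈ W, x.dom (Λ.d l) ∧ x.seg 0 (Λ.d l) = l}

/-- The topology on the path space `X_Λ`, generated by the sets `Z(U) ∩ Z(F)ᶜ` for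
`U ⊆ Λ` open and `F ⊆ Λ` compact. -/
def pathTopology (Λ : TopKGraph k Obj Mor) : TopologicalSpace (KPath Λ) :=
  TopologicalSpace.generateFrom
    {S | ∃ U F : Set Mor, IsOpen U ∧ IsCompact F ∧ S = ZSet Λ U ∩ (ZSet Λ F)ᶜ}

/-- The ambient space of triples for the path groupoid. -/
abbrev GTriple (Λ : TopKGraph k Obj Mor) : Type :=
  KPath Λ × (Fin k → ℤ) × KPath Λ

/-- The path groupoid `G_Λ` as a set of triples `(x, m, y)` such that `σ^p x = σ^q y`
for some `p ≤ d(x)`, `q ≤ d(y)` with `p - q = m`. -/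
def PathGroupoidCarrier (Λ : TopKGraph k Obj Mor) : Set (GTriple Λ) :=
  {t | ∃ p q : Fin k → ℕ, t.2.1 = (fun i => (p i : ℤ) - (q i : ℤ)) ∧
        ∃ z : KPath Λ, IsShiftOf p t.1 z ∧ IsShiftOf q t.2.2 z}

/-- `Z(F, m) = {(λx, d(λ)-d(μ), μx) : (λ,μ) ∈ F, d(λ)-d(μ) = m}`. -/
def ZG (Λ : TopKGraph k Obj Mor) (F : Set (Mor × Mor)) (m : Fin k → ℤ) :
    Set (GTriple Λ) :=
  {t | t.2.1 = m ∧ ∃ lm ∈ F, Λ.s lm.1 = Λ.s lm.2 ∧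
        (fun i => (Λ.d lm.1 i : ℤ) - (Λ.d lm.2 i : ℤ)) = m ∧
        ∃ x : KPath Λ, IsConcatOf lm.1 x t.1 ∧ IsConcatOf lm.2 x t.2.2}

/-- The topology on the path groupoid `G_Λ`, generated by the sets
`Z(U *ₛ V, m) ∩ Z(F, m)ᶜ` with `U, V` open and `F ⊆ Λ *ₛ Λ` compact. -/
def groupoidTopology (Λ : TopKGraph k Obj Mor) : TopologicalSpace (GTriple Λ) :=
  TopologicalSpace.generateFrom
    {S | ∃ (m : Fin k → ℤ) (U V : Set Mor) (F : Set (Mor × Mor)),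
      IsOpen U ∧ IsOpen V ∧ IsCompact F ∧
      S = ZG Λ ((U ×ˢ V) ∩ {lm | Λ.s lm.1 = Λ.s lm.2}) m ∩ (ZG Λ F m)ᶜ}

/-- A boundary path `x` is aperiodic if `σ^p x ≠ σ^q x` whenever `p ≠ q`,
`p, q ≤ d(x)`. -/
def Aperiodic (x : KPath Λ) : Prop :=
  ∀ p q : Fin k → ℕ, x.dom p → x.dom q → p ≠ q →
    ¬∃ z : KPath Λ, IsShiftOf p x z ∧ IsShiftOf q x z

/-- `Λ` is proper: `U Λ^m` is compact for every compact `U ⊆ Λ^0` and `m ∈ ℕ^k`. -/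
def ProperGraph (Λ : TopKGraph k Obj Mor) : Prop :=
  ∀ (m : Fin k → ℕ) (U : Set Obj), IsCompact U →
    IsCompact {f : Mor | Λ.d f = m ∧ Λ.r f ∈ U}

/-- `Λ` has no sources: every vertex receives an edge of each degree `e_i`. -/
def NoSources (Λ : TopKGraph k Obj Mor) : Prop :=
  ∀ (v : Obj) (i : Fin k), ∃ f : Mor, Λ.d f = Pi.single i 1 ∧ Λ.r f = v

/-- The set `Ext(E; F)` of minimal extenders of `E` by `F`. -/
def ExtSet (Λ : TopKGraph k Obj Mor) (E F : Set Mor) : Set Mor :=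
  {a | ∃ l ∈ E, ∃ m ∈ F, ∃ b : Mor, (a, b) ∈ MinExt Λ l m}

end TKG

open TKG in
private lemma TKG.exists_comp_eq
    {k : ℕ} {Obj Mor : Type} [TopologicalSpace Obj] [TopologicalSpace Mor]
    {Λ : TopKGraph k Obj Mor} {f f' g : Mor} (hff : f = f')
    (h : Λ.s f = Λ.r g) : ∃ h' : Λ.s f' = Λ.r g, Λ.comp f' g h' = Λ.comp f g h := by
  subst hff; exact ⟨h, rfl⟩

open TKG in
private lemma TKG.initial_seg_unique
    {k : ℕ} {Obj Mor : Type} [TopologicalSpace Obj] [TopologicalSpace Mor]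
    {Λ : TopKGraph k Obj Mor} (x : KPath Λ) {p : Fin k → ℕ} (hp : x.dom p)
    {m b : Mor} (h : Λ.s m = Λ.r b) (hle : Λ.d m ≤ p)
    (hc : Λ.comp m b h = x.seg 0 p) : x.seg 0 (Λ.d m) = m := by
  obtain ⟨h2, hc2⟩ := x.seg_comp 0 (Λ.d m) p (by intro i; simp) hle hp
  have hdp : Λ.d (x.seg 0 p) = p := by
    have := x.d_seg 0 p (by intro i; simp) hp
    simpa using this
  have hdq : Λ.d (x.seg 0 (Λ.d m)) = Λ.d m := by
    have := x.d_seg 0 (Λ.d m) (by intro i; simp)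
      (fun i => le_trans (Nat.cast_le.mpr (hle i)) (hp i))
    simpa using this
  have hdqp : Λ.d (x.seg (Λ.d m) p) = p - Λ.d m := x.d_seg (Λ.d m) p hle hp
  have heq : Λ.d (x.seg 0 p) = Λ.d m + (p - Λ.d m) := by
    rw [hdp]; funext i
    have h3 : Λ.d m i ≤ p i := hle i
    show p i = Λ.d m i + (p i - Λ.d m i)
    omega
  obtain ⟨gh, _, huniq⟩ := Λ.factor (x.seg 0 p) (Λ.d m) (p - Λ.d m) heq
  have hdb : Λ.d b = p - Λ.d m := by
    have hsum : Λ.d m + Λ.d b = p := by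
      rw [← Λ.d_comp m b h, hc, hdp]
    funext i
    have := congrFun hsum i
    simp only [Pi.add_apply] at this
    simp only [Pi.sub_apply]
    omega
  have e1 : (m, b) = gh := huniq (m, b) ⟨h, hc, rfl, hdb⟩
  have e2 : (x.seg 0 (Λ.d m), x.seg (Λ.d m) p) = gh :=
    huniq _ ⟨h2, hc2, hdq, hdqp⟩
  exact (congrArg Prod.fst (e1.trans e2.symm)).symm

open TKG in
/-- If `Λ` is compactly aligned, `U` is relatively compact and `F` is compact, then
`Z(U) ∩ Z(F)ᶜ = Z(U) ∩ Z(cl(U) ∨ F)ᶜ` in the path space `X_Λ`. -/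
theorem zset_inter_compl_eq_mce
    {k : ℕ} {Obj Mor : Type} [TopologicalSpace Obj] [TopologicalSpace Mor]
    (Λ : TopKGraph k Obj Mor) (hΛ : CompactlyAligned Λ)
    (U F : Set Mor) (hU : IsCompact (closure U)) (hF : IsCompact F) :
    ZSet Λ U ∩ (ZSet Λ F)ᶜ = ZSet Λ U ∩ (ZSet Λ (MCE Λ (closure U) F))ᶜ := by
  ext x
  simp only [mem_inter_iff, mem_compl_iff]
  refine and_congr_right fun hxU => not_congr ?_
  constructor
  · rintro ⟨m, hm, hdm, hsm⟩
    obtain ⟨l, hl, hdl, hsl⟩ := hxU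
    set p := Λ.d l ⊔ Λ.d m with hpdef
    have hlep : Λ.d l ≤ p := le_sup_left
    have hmep : Λ.d m ≤ p := le_sup_right
    have hdomp : x.dom p := by
      intro i
      have hpi : p i = max (Λ.d l i) (Λ.d m i) := rfl
      rw [hpi]
      rcases le_total (Λ.d l i) (Λ.d m i) with hh | hh
      · rw [max_eq_right hh]; exact hdm i
      · rw [max_eq_left hh]; exact hdl i
    obtain ⟨h1, hc1⟩ := x.seg_comp 0 (Λ.d l) p (by intro i; simp) hlep hdomp
    obtain ⟨h2, hc2⟩ := x.seg_comp 0 (Λ.d m) p (by intro i; simp) hmep hdomp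
    obtain ⟨h1', hc1'⟩ := TKG.exists_comp_eq hsl h1
    obtain ⟨h2', hc2'⟩ := TKG.exists_comp_eq hsm h2
    have hdp : Λ.d (x.seg 0 p) = p := by
      have := x.d_seg 0 p (by intro i; simp) hdomp; simpa using this
    refine ⟨x.seg 0 p, ⟨l, subset_closure hl, m, hm, by rw [hdp],
      ⟨x.seg (Λ.d l) p, h1', hc1'.trans hc1⟩,
      ⟨x.seg (Λ.d m) p, h2', hc2'.trans hc2⟩⟩, ?_, ?_⟩
    · rw [hdp]; exact hdomp
    · rw [hdp]
  · rintro ⟨f, ⟨l, hl, m, hm, hdfsup, ⟨a, ha, hca⟩, ⟨b, hb, hcb⟩⟩, hdomf, hsegf⟩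
    have hle : Λ.d m ≤ Λ.d f := by rw [hdfsup]; exact le_sup_right
    refine ⟨m, hm, fun i => le_trans (Nat.cast_le.mpr (hle i)) (hdomf i), ?_⟩
    exact TKG.initial_seg_unique x hdomf hb hle (hcb.trans hsegf.symm)
end

section
/- In a compactly aligned topological k-graph Λ, for p, q ∈ ℕ^k and compact sets U ⊆ Λ^p and V ⊆ Λ^q, the set Z(U *_s V, p − q) is compact in the path groupoid G_Λ. -/
open Set

namespace TKG

open Filter Topology Set

section Helpers

/-- ℕ∞ helper lemmas -/
theorem he1 (a b : ℕ) (e : ℕ∞) (h : (a:ℕ∞) ≤ (b:ℕ∞) + e) : ((a - b : ℕ) : ℕ∞) ≤ e := by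
  cases e using ENat.recTopCoe with
  | top => exact le_top
  | coe e => rw [← ENat.coe_add, Nat.cast_le] at h; rw [Nat.cast_le]; omega

theorem he2 (c : ℕ) (e : ℕ∞) (h : (c:ℕ∞) ≤ e) : (c:ℕ∞) + (e - c) = e := by
  cases e using ENat.recTopCoe with
  | top => simp
  | coe e => rw [Nat.cast_le] at h; rw [← ENat.coe_sub, ← ENat.coe_add]; congr 1; omega

theorem he3 (c u : ℕ) (e : ℕ∞) (hc : (c:ℕ∞) ≤ e) (hu : (u:ℕ∞) ≤ e - c) :
    ((c + u : ℕ):ℕ∞) ≤ e := by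
  cases e using ENat.recTopCoe with
  | top => exact le_top
  | coe e => rw [← ENat.coe_sub, Nat.cast_le] at hu; rw [Nat.cast_le] at hc ⊢; omega

theorem he4 (m c : ℕ) (e : ℕ∞) (h : ((m + c:ℕ):ℕ∞) ≤ (m:ℕ∞) + e) : (c:ℕ∞) ≤ e := by
  cases e using ENat.recTopCoe with
  | top => exact le_top
  | coe e => rw [← ENat.coe_add, Nat.cast_le] at h; rw [Nat.cast_le]; omega

theorem he5 (a b : ℕ) (e : ℕ∞) (h1 : (a:ℕ∞) ≤ e) (h2 : (b:ℕ∞) ≤ e) :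
    ((max a b : ℕ):ℕ∞) ≤ e := by
  cases e using ENat.recTopCoe with
  | top => exact le_top
  | coe e => rw [Nat.cast_le] at h1 h2 ⊢; omega

theorem he6 (a u : ℕ) (e : ℕ∞) (h1 : (a:ℕ∞) ≤ e) (h2 : (u:ℕ∞) ≤ e) (hau : a ≤ u) :
    ((u - a : ℕ):ℕ∞) ≤ e - a := by
  cases e using ENat.recTopCoe with
  | top => simp
  | coe e =>
    rw [← ENat.coe_sub, Nat.cast_le] at *
    omega

theorem pile {c c' : Fin k → ℕ} (h : ∀ i, c i ≤ c' i) : c ≤ c' := h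

theorem pize (c : Fin k → ℕ) : (0 : Fin k → ℕ) ≤ c := fun i => Nat.zero_le _

end Helpers

variable {k : ℕ} {Obj Mor : Type} [TopologicalSpace Obj] [TopologicalSpace Mor]
variable (Λ : TopKGraph k Obj Mor)

theorem isOpen_deg (m : Fin k → ℕ) : IsOpen {f : Mor | Λ.d f = m} :=
  (isOpen_discrete ({m} : Set (Fin k → ℕ))).preimage Λ.continuous_d

theorem isClosed_deg (m : Fin k → ℕ) : IsClosed {f : Mor | Λ.d f = m} :=
  (isClosed_singleton (x := m)).preimage Λ.continuous_d

/-- Factorization pair. -/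
noncomputable def fpair (m n : Fin k → ℕ) (f : Mor) : Mor × Mor :=
  if h : Λ.d f = m + n then (Λ.factor f m n h).choose else (f, f)

noncomputable def fa (m n : Fin k → ℕ) (f : Mor) : Mor := (fpair Λ m n f).1
noncomputable def fb (m n : Fin k → ℕ) (f : Mor) : Mor := (fpair Λ m n f).2

theorem fpair_spec {m n : Fin k → ℕ} {f : Mor} (h : Λ.d f = m + n) :
    ∃ hc : Λ.s (fa Λ m n f) = Λ.r (fb Λ m n f),
      Λ.comp _ _ hc = f ∧ Λ.d (fa Λ m n f) = m ∧ Λ.d (fb Λ m n f) = n := by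
  have h2 := (Λ.factor f m n h).choose_spec.1
  simp only [fa, fb, fpair, dif_pos h]
  exact h2

theorem fpair_unique {m n : Fin k → ℕ} {f g h' : Mor} (hc : Λ.s g = Λ.r h')
    (hf : Λ.comp g h' hc = f) (hg : Λ.d g = m) (hh : Λ.d h' = n) :
    fa Λ m n f = g ∧ fb Λ m n f = h' := by
  have hd : Λ.d f = m + n := by rw [← hf, Λ.d_comp, hg, hh]
  have hu : (g, h') = (Λ.factor f m n hd).choose :=
    (Λ.factor f m n hd).choose_spec.2 (g, h') ⟨hc, hf, hg, hh⟩
  constructor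
  · simp only [fa, fpair, dif_pos hd, ← hu]
  · simp only [fb, fpair, dif_pos hd, ← hu]

theorem d_fa {m n : Fin k → ℕ} {f : Mor} (h : Λ.d f = m + n) : Λ.d (fa Λ m n f) = m :=
  (fpair_spec Λ h).choose_spec.2.1

theorem d_fb {m n : Fin k → ℕ} {f : Mor} (h : Λ.d f = m + n) : Λ.d (fb Λ m n f) = n :=
  (fpair_spec Λ h).choose_spec.2.2

theorem s_fa_r_fb {m n : Fin k → ℕ} {f : Mor} (h : Λ.d f = m + n) :
    Λ.s (fa Λ m n f) = Λ.r (fb Λ m n f) := (fpair_spec Λ h).choose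

theorem comp_fa_fb {m n : Fin k → ℕ} {f : Mor} (h : Λ.d f = m + n) :
    Λ.comp (fa Λ m n f) (fb Λ m n f) (s_fa_r_fb Λ h) = f :=
  (fpair_spec Λ h).choose_spec.1

theorem r_fa {m n : Fin k → ℕ} {f : Mor} (h : Λ.d f = m + n) : Λ.r (fa Λ m n f) = Λ.r f := by
  conv_rhs => rw [← comp_fa_fb Λ h]
  rw [Λ.r_comp]

theorem s_fb {m n : Fin k → ℕ} {f : Mor} (h : Λ.d f = m + n) : Λ.s (fb Λ m n f) = Λ.s f := by
  conv_rhs => rw [← comp_fa_fb Λ h]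
  rw [Λ.s_comp]

theorem comp_congr {f g f' g' : Mor} (hf : f = f') (hg : g = g')
    (hc : Λ.s f = Λ.r g) (hc' : Λ.s f' = Λ.r g') : Λ.comp f g hc = Λ.comp f' g' hc' := by
  subst hf; subst hg; rfl

theorem eq_ident_of_deg_zero {f : Mor} (h : Λ.d f = 0) : f = Λ.ident (Λ.r f) := by
  have h1 := fpair_unique Λ (m := 0) (n := 0) (f := f) (g := Λ.ident (Λ.r f)) (h' := f)
    (by rw [Λ.s_ident]) (Λ.ident_comp f _) (Λ.d_ident _) h
  have h2 := fpair_unique Λ (m := 0) (n := 0) (f := f) (g := f) (h' := Λ.ident (Λ.s f))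
    (by rw [Λ.r_ident]) (Λ.comp_ident f _) h (Λ.d_ident _)
  rw [← h1.1, h2.1]

theorem comp_deg0_right {f e : Mor} (hc : Λ.s f = Λ.r e) (he : Λ.d e = 0) :
    Λ.comp f e hc = f := by
  have he2 : e = Λ.ident (Λ.s f) := by rw [eq_ident_of_deg_zero Λ he, ← hc]
  subst he2
  exact Λ.comp_ident f _

theorem comp_deg0_left {f e : Mor} (hc : Λ.s e = Λ.r f) (he : Λ.d e = 0) :
    Λ.comp e f hc = f := by
  have h1 : e = Λ.ident (Λ.r e) := eq_ident_of_deg_zero Λ he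
  have h2 : Λ.s e = Λ.r e := by conv_lhs => rw [h1, Λ.s_ident]
  have he2 : e = Λ.ident (Λ.r f) := by
    rw [h1]; congr 1; rw [← hc, h2]
  subst he2
  exact Λ.ident_comp f _

theorem comp_left_cancel {g h₁ h₂ : Mor} (hc₁ : Λ.s g = Λ.r h₁) (hc₂ : Λ.s g = Λ.r h₂)
    (hd : Λ.d h₁ = Λ.d h₂) (he : Λ.comp g h₁ hc₁ = Λ.comp g h₂ hc₂) : h₁ = h₂ := by
  have u₁ := (fpair_unique Λ hc₁ rfl rfl rfl).2
  have u₂ := (fpair_unique Λ (f := Λ.comp g h₁ hc₁) hc₂ he.symm rfl hd.symm).2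
  rw [← u₁, ← u₂]

theorem fa_zero_right {m : Fin k → ℕ} {f : Mor} (h : Λ.d f = m) :
    fa Λ m 0 f = f ∧ fb Λ m 0 f = Λ.ident (Λ.s f) :=
  fpair_unique Λ (by rw [Λ.r_ident]) (Λ.comp_ident f _) h (Λ.d_ident _)

theorem fa_zero_left {m : Fin k → ℕ} {f : Mor} (h : Λ.d f = m) :
    fa Λ 0 m f = Λ.ident (Λ.r f) ∧ fb Λ 0 m f = f :=
  fpair_unique Λ (by rw [Λ.s_ident]) (Λ.ident_comp f _) (Λ.d_ident _) h

theorem fac_assoc {m n u : Fin k → ℕ} {f : Mor} (h : Λ.d f = m + n + u) :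
    fa Λ m (n+u) f = fa Λ m n (fa Λ (m+n) u f) ∧
    fa Λ n u (fb Λ m (n+u) f) = fb Λ m n (fa Λ (m+n) u f) ∧
    fb Λ n u (fb Λ m (n+u) f) = fb Λ (m+n) u f := by
  set A := fa Λ (m+n) u f with hA
  set D := fb Λ (m+n) u f with hD
  obtain ⟨hc, hAD, hdA, hdD⟩ := fpair_spec Λ (m := m+n) (n := u) h
  set B := fa Λ m n A with hB
  set C := fb Λ m n A with hC
  obtain ⟨hc2, hBC, hdB, hdC⟩ := fpair_spec Λ (m := m) (n := n) hdA
  have hc3 : Λ.s C = Λ.r D := by rw [← hc, ← hBC, Λ.s_comp]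
  have hc4 : Λ.s B = Λ.r (Λ.comp C D hc3) := by rw [Λ.r_comp, hc2]
  have hf2 : Λ.comp B (Λ.comp C D hc3) hc4 = f := by
    rw [← Λ.comp_assoc B C D hc2 hc3 (by rw [hBC, hc]) hc4]
    exact (comp_congr Λ hBC rfl _ _).trans hAD
  have hdCD : Λ.d (Λ.comp C D hc3) = n + u := by rw [Λ.d_comp, hdC, hdD]
  have u1 := fpair_unique Λ hc4 hf2 hdB hdCD
  have u2 := fpair_unique Λ hc3 rfl hdC hdD
  refine ⟨u1.1, ?_, ?_⟩
  · rw [u1.2]; exact u2.1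
  · rw [u1.2]; exact u2.2

theorem fac_comp_left {g P : Mor} (hc : Λ.s g = Λ.r P) {n u : Fin k → ℕ}
    (hP : Λ.d P = n + u) :
    ∃ h' : Λ.s g = Λ.r (fa Λ n u P),
      fa Λ (Λ.d g + n) u (Λ.comp g P hc) = Λ.comp g (fa Λ n u P) h' ∧
      fb Λ (Λ.d g + n) u (Λ.comp g P hc) = fb Λ n u P := by
  have h' : Λ.s g = Λ.r (fa Λ n u P) := by rw [r_fa Λ hP, ← hc]
  have hc2 : Λ.s (Λ.comp g (fa Λ n u P) h') = Λ.r (fb Λ n u P) := by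
    rw [Λ.s_comp]; exact s_fa_r_fb Λ hP
  have key : Λ.comp (Λ.comp g (fa Λ n u P) h') (fb Λ n u P) hc2 = Λ.comp g P hc := by
    rw [Λ.comp_assoc g (fa Λ n u P) (fb Λ n u P) h' (s_fa_r_fb Λ hP) hc2
      (by rw [Λ.r_comp, h'])]
    exact comp_congr Λ rfl (comp_fa_fb Λ hP) _ _
  have hd1 : Λ.d (Λ.comp g (fa Λ n u P) h') = Λ.d g + n := by
    rw [Λ.d_comp, d_fa Λ hP]
  exact ⟨h', (fpair_unique Λ hc2 key hd1 (d_fb Λ hP)).1,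
    (fpair_unique Λ hc2 key hd1 (d_fb Λ hP)).2⟩

theorem fa_congr {m n m' n' : Fin k → ℕ} {f f' : Mor} (hm : m = m') (hn : n = n')
    (hf : f = f') : fa Λ m n f = fa Λ m' n' f' := by subst hm; subst hn; subst hf; rfl

theorem fb_congr {m n m' n' : Fin k → ℕ} {f f' : Mor} (hm : m = m') (hn : n = n')
    (hf : f = f') : fb Λ m n f = fb Λ m' n' f' := by subst hm; subst hn; subst hf; rfl

end TKG
namespace TKG

open Filter Topology Set
open scoped Classical

variable {k : ℕ} {Obj Mor : Type} [TopologicalSpace Obj] [TopologicalSpace Mor]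
variable (Λ : TopKGraph k Obj Mor)

theorem fa_mem_open {m n : Fin k → ℕ} {ν : Mor} (hν : Λ.d ν = m + n) {O1 O2 : Set Mor}
    (hO1 : IsOpen O1) (hO2 : IsOpen O2) (h1 : fa Λ m n ν ∈ O1) (h2 : fb Λ m n ν ∈ O2) :
    ∃ N : Set Mor, IsOpen N ∧ ν ∈ N ∧
      ∀ g ∈ N, Λ.d g = m + n → fa Λ m n g ∈ O1 ∧ fb Λ m n g ∈ O2 := by
  set T : Set {pr : Mor × Mor // Λ.s pr.1 = Λ.r pr.2} :=
    Subtype.val ⁻¹' ((O1 ∩ {g | Λ.d g = m}) ×ˢ (O2 ∩ {g | Λ.d g = n})) with hT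
  have hTopen : IsOpen T :=
    (((hO1.inter (isOpen_deg Λ m)).prod (hO2.inter (isOpen_deg Λ n)))).preimage
      continuous_subtype_val
  refine ⟨(fun pr : {pr : Mor × Mor // Λ.s pr.1 = Λ.r pr.2} => Λ.comp pr.1.1 pr.1.2 pr.2) '' T,
    Λ.isOpenMap_comp T hTopen,
    ⟨⟨(fa Λ m n ν, fb Λ m n ν), s_fa_r_fb Λ hν⟩,
      ⟨⟨h1, d_fa Λ hν⟩, ⟨h2, d_fb Λ hν⟩⟩, comp_fa_fb Λ hν⟩, ?_⟩
  rintro g ⟨⟨⟨g1, g2⟩, hc⟩, hmem, rfl⟩ hdg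
  obtain ⟨⟨hg1, hg2⟩, hh1, hh2⟩ := hmem
  have hu := fpair_unique Λ (m := m) (n := n) hc rfl hg2 hh2
  rw [hu.1, hu.2]
  exact ⟨hg1, hh1⟩

theorem tendsto_fab {α : Type} {F : Filter α} {G : α → Mor} {ν : Mor} {m n : Fin k → ℕ}
    (hG : Tendsto G F (𝓝 ν)) (hν : Λ.d ν = m + n) (hGd : ∀ᶠ a in F, Λ.d (G a) = m + n) :
    Tendsto (fun a => fa Λ m n (G a)) F (𝓝 (fa Λ m n ν)) ∧
    Tendsto (fun a => fb Λ m n (G a)) F (𝓝 (fb Λ m n ν)) := by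
  constructor <;>
  · rw [tendsto_nhds]
    intro O hO hmem
    first
    | (obtain ⟨N, hNo, hNν, hNp⟩ := fa_mem_open Λ hν hO isOpen_univ hmem (mem_univ _)
       refine mem_of_superset (inter_mem (hG (hNo.mem_nhds hNν)) hGd) ?_
       rintro a ⟨ha1, ha2⟩
       exact (hNp (G a) ha1 ha2).1)
    | (obtain ⟨N, hNo, hNν, hNp⟩ := fa_mem_open Λ hν isOpen_univ hO (mem_univ _) hmem
       refine mem_of_superset (inter_mem (hG (hNo.mem_nhds hNν)) hGd) ?_
       rintro a ⟨ha1, ha2⟩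
       exact (hNp (G a) ha1 ha2).2)

end TKG
namespace TKG

open Filter Topology Set
open scoped Classical

variable {k : ℕ} {Obj Mor : Type} [TopologicalSpace Obj] [TopologicalSpace Mor]
variable (Λ : TopKGraph k Obj Mor)

theorem dom_mono {x : KPath Λ} {a b : Fin k → ℕ} (hab : a ≤ b) (hb : x.dom b) : x.dom a :=
  fun i => le_trans (Nat.cast_le.mpr (hab i)) (hb i)

theorem dom_zero (x : KPath Λ) : x.dom 0 := fun i => by simp

theorem rng_seg0 {x : KPath Λ} {c : Fin k → ℕ} (hc : x.dom c) :
    Λ.r (x.seg 0 c) = x.rng := by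
  obtain ⟨h1, h2⟩ := x.seg_comp 0 0 c le_rfl (pize c) hc
  rw [← h2, Λ.r_comp]; rfl

/-- `x.seg 0 r` and `x.seg r r'` as factors of `x.seg 0 r'`. -/
theorem seg0_fa {x : KPath Λ} {r r' : Fin k → ℕ} (h : r ≤ r') (h' : x.dom r') :
    x.seg 0 r = fa Λ r (r' - r) (x.seg 0 r') ∧
    x.seg r r' = fb Λ r (r' - r) (x.seg 0 r') := by
  obtain ⟨hc, hcomp⟩ := x.seg_comp 0 r r' (pize r) h h'
  have hd1 : Λ.d (x.seg 0 r) = r := by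
    rw [x.d_seg 0 r (pize r) (dom_mono Λ h h')]
    funext i; simp
  exact ⟨(fpair_unique Λ hc hcomp hd1 (x.d_seg r r' h h')).1.symm,
    (fpair_unique Λ hc hcomp hd1 (x.d_seg r r' h h')).2.symm⟩

theorem d_seg0 {x : KPath Λ} {r : Fin k → ℕ} (h : x.dom r) : Λ.d (x.seg 0 r) = r := by
  rw [x.d_seg 0 r (pize r) h]; funext i; simp

theorem KPath.ext_core {x y : KPath Λ} (hd : x.deg = y.deg) (hs : x.seg = y.seg) : x = y := by
  cases x; cases y
  cases hd; cases hs; rfl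

theorem KPath.ext' {x y : KPath Λ} (hd : x.deg = y.deg)
    (h : ∀ c, x.dom c → x.seg 0 c = y.seg 0 c) : x = y := by
  refine KPath.ext_core Λ hd (funext fun a => funext fun b => ?_)
  by_cases hab : a ≤ b ∧ ∀ i, (b i : ℕ∞) ≤ x.deg i
  · have hdy : y.dom b := fun i => hd ▸ hab.2 i
    rw [(seg0_fa Λ hab.1 hab.2).2, (seg0_fa Λ hab.1 hdy).2, h b hab.2]
  · have hxy : ¬(a ≤ b ∧ ∀ i, (b i : ℕ∞) ≤ y.deg i) := by rw [← hd]; exact hab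
    rw [x.seg_junk a b hab, y.seg_junk a b hxy, h 0 (dom_zero Λ x)]

/-- Building a path from its initial segments. -/
noncomputable def mkPath (dg : Fin k → ℕ∞) (σ : (Fin k → ℕ) → Mor)
    (h1 : ∀ c, (∀ i, (c i : ℕ∞) ≤ dg i) → Λ.d (σ c) = c)
    (h3 : ∀ c c', c ≤ c' → (∀ i, (c' i : ℕ∞) ≤ dg i) → fa Λ c (c' - c) (σ c') = σ c) :
    KPath Λ where
  deg := dg
  seg a b := if h : a ≤ b ∧ ∀ i, (b i : ℕ∞) ≤ dg i then fb Λ a (b - a) (σ b) else σ 0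
  seg_junk a b h := by
    beta_reduce
    have hz : (0:Fin k → ℕ) ≤ 0 ∧ ∀ i, ((0:Fin k → ℕ) i : ℕ∞) ≤ dg i := ⟨le_rfl, by simp⟩
    rw [dif_neg h, dif_pos hz]
    have hd0 : Λ.d (σ 0) = 0 + (0 - 0) := by rw [h1 0 hz.2]; funext i; simp
    rw [(fa_zero_left Λ (f := σ 0) (m := (0:Fin k → ℕ) - 0) (by rw [h1 0 hz.2]; funext i; simp)).2]
  d_seg a b hab hb := by
    beta_reduce
    rw [dif_pos ⟨hab, hb⟩]
    refine d_fb Λ ?_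
    rw [h1 b hb]; funext i; simp only [Pi.add_apply, Pi.sub_apply]
    have h' : a i ≤ b i := hab i; omega
  seg_comp a b c hab hbc hc := by
    beta_reduce
    have hbd : ∀ i, (b i : ℕ∞) ≤ dg i := fun i => le_trans (Nat.cast_le.mpr (hbc i)) (hc i)
    rw [dif_pos ⟨hab, hbd⟩, dif_pos ⟨hbc, hc⟩, dif_pos ⟨le_trans hab hbc, hc⟩]
    have hσb : σ b = fa Λ b (c - b) (σ c) := (h3 b c hbc hc).symm
    have i1 : a + (b - a) = b := by
      funext i; simp only [Pi.add_apply, Pi.sub_apply]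
      have h' : a i ≤ b i := hab i; omega
    have i2 : (b - a) + (c - b) = c - a := by
      funext i; simp only [Pi.add_apply, Pi.sub_apply]
      have h' : a i ≤ b i := hab i; have h'' : b i ≤ c i := hbc i; omega
    have hdc : Λ.d (σ c) = a + (b - a) + (c - b) := by
      rw [h1 c hc]; funext i
      simp only [Pi.add_apply, Pi.sub_apply]
      have h' : a i ≤ b i := hab i; have h'' : b i ≤ c i := hbc i; omega
    obtain ⟨w1, w2, w3⟩ := fac_assoc Λ hdc
    rw [i1] at w2 w3
    rw [i2] at w2 w3
    have e1 : fb Λ a (b - a) (σ b) = fa Λ (b - a) (c - b) (fb Λ a (c - a) (σ c)) := by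
      rw [hσb]; exact w2.symm
    have e2 : fb Λ b (c - b) (σ c) = fb Λ (b - a) (c - b) (fb Λ a (c - a) (σ c)) := w3.symm
    have hD : Λ.d (fb Λ a (c - a) (σ c)) = (b - a) + (c - b) := by
      have hd2 : Λ.d (σ c) = a + (c - a) := by
        rw [h1 c hc]; funext i; simp only [Pi.add_apply, Pi.sub_apply]
        have h' : a i ≤ c i := le_trans (hab i) (hbc i); omega
      rw [d_fb Λ hd2]; exact i2.symm
    rw [e1, e2]
    exact ⟨s_fa_r_fb Λ hD, comp_fa_fb Λ hD⟩
  seg_ident a ha := by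
    beta_reduce
    rw [dif_pos ⟨le_rfl, ha⟩]
    have hd : Λ.d (σ a) = a + ((a - a)) := by rw [h1 a ha]; funext i; simp
    have h2 := (fa_zero_right Λ (f := σ a) (m := a) (h1 a ha))
    have heq : fb Λ a (a - a) (σ a) = Λ.ident (Λ.s (σ a)) := by
      rw [← h2.2]; exact fb_congr Λ rfl (by funext i; simp) rfl
    rw [heq, Λ.r_ident]

theorem mkPath_deg (dg σ h1 h3) : (mkPath Λ dg σ h1 h3).deg = dg := rfl

theorem mkPath_seg0 {dg σ h1 h3} {c : Fin k → ℕ} (hc : ∀ i, (c i : ℕ∞) ≤ dg i) :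
    (mkPath Λ dg σ h1 h3).seg 0 c = σ c := by
  show dite _ _ _ = _
  rw [dif_pos ⟨pize c, hc⟩]
  have : Λ.d (σ c) = 0 + (c - 0) := by rw [h1 c hc]; funext i; simp
  rw [(fa_zero_left Λ (f := σ c) (m := c - 0) (by rw [h1 c hc]; funext i; simp)).2]

end TKG
namespace TKG

open Filter Topology Set
open scoped Classical

variable {k : ℕ} {Obj Mor : Type} [TopologicalSpace Obj] [TopologicalSpace Mor]
variable (Λ : TopKGraph k Obj Mor)

/-- The shifted path `σ^c x`. -/
noncomputable def shiftPath (x : KPath Λ) (c : Fin k → ℕ) (hc : x.dom c) : KPath Λ :=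
  mkPath Λ (fun i => x.deg i - (c i : ℕ∞)) (fun u => x.seg c (c + u))
    (by
      intro u hu
      have hdom : x.dom (c + u) := fun i => he3 (c i) (u i) (x.deg i) (hc i) (hu i)
      rw [x.d_seg c (c+u) (fun i => Nat.le_add_right _ _) hdom]
      funext i; simp only [Pi.add_apply, Pi.sub_apply]; omega)
    (by
      intro u u' huu hu'
      have hdom : x.dom (c + u') := fun i => he3 (c i) (u' i) (x.deg i) (hc i) (hu' i)
      have hdom2 : x.dom (c + u) := dom_mono Λ (fun i => by
        simp only [Pi.add_apply]; exact Nat.add_le_add_left (huu i) _) hdom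
      obtain ⟨hcc, hcomp⟩ := x.seg_comp c (c+u) (c+u')
        (fun i => Nat.le_add_right _ _)
        (fun i => by simp only [Pi.add_apply]; exact Nat.add_le_add_left (huu i) _) hdom
      have hd1 : Λ.d (x.seg c (c+u)) = u := by
        rw [x.d_seg c (c+u) (fun i => Nat.le_add_right _ _) hdom2]
        funext i; simp only [Pi.add_apply, Pi.sub_apply]; omega
      have hd2 : Λ.d (x.seg (c+u) (c+u')) = u' - u := by
        rw [x.d_seg (c+u) (c+u') (fun i => by
          simp only [Pi.add_apply]; exact Nat.add_le_add_left (huu i) _) hdom]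
        funext i; simp only [Pi.add_apply, Pi.sub_apply]; omega
      exact (fpair_unique Λ hcc hcomp hd1 hd2).1)

theorem shiftPath_deg (x : KPath Λ) (c : Fin k → ℕ) (hc : x.dom c) :
    (shiftPath Λ x c hc).deg = fun i => x.deg i - (c i : ℕ∞) := rfl

theorem shiftPath_seg0 (x : KPath Λ) (c : Fin k → ℕ) (hc : x.dom c) {u : Fin k → ℕ}
    (hu : ∀ i, (u i : ℕ∞) ≤ x.deg i - (c i : ℕ∞)) :
    (shiftPath Λ x c hc).seg 0 u = x.seg c (c + u) := mkPath_seg0 Λ hu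

theorem shiftPath_rng (x : KPath Λ) (c : Fin k → ℕ) (hc : x.dom c) :
    (shiftPath Λ x c hc).rng = Λ.r (x.seg c c) := by
  show Λ.r ((shiftPath Λ x c hc).seg 0 0) = _
  rw [shiftPath_seg0 Λ x c hc (u := 0) (fun i => by simp)]
  have h0 : c + (0 : Fin k → ℕ) = c := by funext i; simp
  rw [h0]

/-- Initial-segment function for the concatenation `l ⬝ x`. -/
noncomputable def cseg (l : Mor) (x : KPath Λ) (hl : Λ.s l = x.rng) (b : Fin k → ℕ) : Mor :=
  if h : x.dom ((b ⊔ Λ.d l) - Λ.d l) then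
    fa Λ b ((b ⊔ Λ.d l) - b)
      (Λ.comp l (x.seg 0 ((b ⊔ Λ.d l) - Λ.d l)) (hl.trans (rng_seg0 Λ h).symm))
  else l

theorem cseg_eq (l : Mor) (x : KPath Λ) (hl : Λ.s l = x.rng) (b : Fin k → ℕ)
    (h : x.dom ((b ⊔ Λ.d l) - Λ.d l)) :
    cseg Λ l x hl b = fa Λ b ((b ⊔ Λ.d l) - b)
      (Λ.comp l (x.seg 0 ((b ⊔ Λ.d l) - Λ.d l)) (hl.trans (rng_seg0 Λ h).symm)) := by
  rw [cseg, dif_pos h]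

/-- Degree bookkeeping for `cseg`. -/
theorem d_comp_cseg (l : Mor) (x : KPath Λ) (hl : Λ.s l = x.rng) (b : Fin k → ℕ)
    (h : x.dom ((b ⊔ Λ.d l) - Λ.d l)) :
    Λ.d (Λ.comp l (x.seg 0 ((b ⊔ Λ.d l) - Λ.d l)) (hl.trans (rng_seg0 Λ h).symm))
      = b + ((b ⊔ Λ.d l) - b) := by
  rw [Λ.d_comp, d_seg0 Λ h]
  funext i; simp only [Pi.add_apply, Pi.sub_apply, Pi.sup_apply]; omega

/-- h1 for concatenation. -/
theorem cseg_h1 (l : Mor) (x : KPath Λ) (hl : Λ.s l = x.rng) :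
    ∀ b, (∀ i, (b i : ℕ∞) ≤ (fun i => (Λ.d l i : ℕ∞) + x.deg i) i) → Λ.d (cseg Λ l x hl b) = b := by
  intro b hb
  have hdom : x.dom ((b ⊔ Λ.d l) - Λ.d l) := fun i => by
    simpa using he1 (max (b i) (Λ.d l i)) (Λ.d l i) (x.deg i)
      (he5 (b i) (Λ.d l i) _ (hb i) le_self_add)
  rw [cseg_eq Λ l x hl b hdom, d_fa Λ (d_comp_cseg Λ l x hl b hdom)]

theorem comp_seg_fa (l : Mor) (x : KPath Λ) {c c' : Fin k → ℕ} (hcc : c ≤ c') (hd' : x.dom c')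
    (pf : Λ.s l = Λ.r (x.seg 0 c)) (pf' : Λ.s l = Λ.r (x.seg 0 c')) :
    fa Λ (Λ.d l + c) (c' - c) (Λ.comp l (x.seg 0 c') pf') = Λ.comp l (x.seg 0 c) pf := by
  obtain ⟨hx1, hx2⟩ := x.seg_comp 0 c c' (pize c) hcc hd'
  have hsc : Λ.s (Λ.comp l (x.seg 0 c) pf) = Λ.r (x.seg c c') := by rw [Λ.s_comp]; exact hx1
  have pf2 : Λ.s l = Λ.r (Λ.comp (x.seg 0 c) (x.seg c c') hx1) := by rw [Λ.r_comp]; exact pf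
  have hassoc : Λ.comp (Λ.comp l (x.seg 0 c) pf) (x.seg c c') hsc = Λ.comp l (x.seg 0 c') pf' := by
    rw [Λ.comp_assoc l (x.seg 0 c) (x.seg c c') pf hx1 hsc pf2]
    exact comp_congr Λ rfl hx2 _ _
  have hd1 : Λ.d (Λ.comp l (x.seg 0 c) pf) = Λ.d l + c := by
    rw [Λ.d_comp, d_seg0 Λ (dom_mono Λ hcc hd')]
  exact (fpair_unique Λ hsc hassoc hd1 (x.d_seg c c' hcc hd')).1

theorem cseg_h3 (l : Mor) (x : KPath Λ) (hl : Λ.s l = x.rng) :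
    ∀ b b', b ≤ b' → (∀ i, (b' i : ℕ∞) ≤ (fun i => (Λ.d l i : ℕ∞) + x.deg i) i) →
      fa Λ b (b' - b) (cseg Λ l x hl b') = cseg Λ l x hl b := by
  intro b b' hbb hb'
  have hd' : x.dom ((b' ⊔ Λ.d l) - Λ.d l) := fun i => by
    simpa using he1 (max (b' i) (Λ.d l i)) (Λ.d l i) (x.deg i)
      (he5 (b' i) (Λ.d l i) _ (hb' i) le_self_add)
  have hsup : (b ⊔ Λ.d l) - Λ.d l ≤ (b' ⊔ Λ.d l) - Λ.d l := fun i => by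
    simp only [Pi.sub_apply, Pi.sup_apply]
    have h' : b i ≤ b' i := hbb i; omega
  have hd : x.dom ((b ⊔ Λ.d l) - Λ.d l) := dom_mono Λ hsup hd'
  rw [cseg_eq Λ l x hl b hd, cseg_eq Λ l x hl b' hd']
  have hdν' : Λ.d (Λ.comp l (x.seg 0 ((b' ⊔ Λ.d l) - Λ.d l)) (hl.trans (rng_seg0 Λ hd').symm))
      = Λ.d l + ((b' ⊔ Λ.d l) - Λ.d l) := by
    rw [Λ.d_comp, d_seg0 Λ hd']
  -- step 1 : collapse the two fa's on the left
  have e1 : b + ((b' - b) + ((b' ⊔ Λ.d l) - b')) = Λ.d l + ((b' ⊔ Λ.d l) - Λ.d l) := by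
    funext i; simp only [Pi.add_apply, Pi.sub_apply, Pi.sup_apply]
    have h' : b i ≤ b' i := hbb i; omega
  have e2 : b + (b' - b) = b' := by
    funext i; simp only [Pi.add_apply, Pi.sub_apply]
    have h' : b i ≤ b' i := hbb i; omega
  have asc1 := (fac_assoc Λ (m := b) (n := b' - b) (u := (b' ⊔ Λ.d l) - b')
    (f := Λ.comp l (x.seg 0 ((b' ⊔ Λ.d l) - Λ.d l)) (hl.trans (rng_seg0 Λ hd').symm))
    (by rw [hdν', ← e1, add_assoc])).1
  rw [e2] at asc1
  rw [← asc1]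
  -- step 2 : re-split
  have e3 : (b' - b) + ((b' ⊔ Λ.d l) - b') = ((b ⊔ Λ.d l) - b) + (((b' ⊔ Λ.d l) - Λ.d l) - ((b ⊔ Λ.d l) - Λ.d l)) := by
    funext i; simp only [Pi.add_apply, Pi.sub_apply, Pi.sup_apply]
    have h' : b i ≤ b' i := hbb i; omega
  rw [fa_congr Λ (rfl : b = b) e3 rfl]
  have e4 : b + (((b ⊔ Λ.d l) - b) + (((b' ⊔ Λ.d l) - Λ.d l) - ((b ⊔ Λ.d l) - Λ.d l))) = Λ.d l + ((b' ⊔ Λ.d l) - Λ.d l) := by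
    funext i; simp only [Pi.add_apply, Pi.sub_apply, Pi.sup_apply]
    have h' : b i ≤ b' i := hbb i; omega
  have asc2 := (fac_assoc Λ (m := b) (n := (b ⊔ Λ.d l) - b)
    (u := ((b' ⊔ Λ.d l) - Λ.d l) - ((b ⊔ Λ.d l) - Λ.d l))
    (f := Λ.comp l (x.seg 0 ((b' ⊔ Λ.d l) - Λ.d l)) (hl.trans (rng_seg0 Λ hd').symm))
    (by rw [hdν', ← e4, add_assoc])).1
  rw [asc2]
  congr 1
  have e5 : b + ((b ⊔ Λ.d l) - b) = Λ.d l + ((b ⊔ Λ.d l) - Λ.d l) := by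
    funext i; simp only [Pi.add_apply, Pi.sub_apply, Pi.sup_apply]; omega
  rw [fa_congr Λ e5 rfl rfl]
  exact comp_seg_fa Λ l x hsup hd' (hl.trans (rng_seg0 Λ hd).symm) (hl.trans (rng_seg0 Λ hd').symm)

/-- The concatenation `l ⬝ x` as a `KPath`. -/
noncomputable def concatPath (l : Mor) (x : KPath Λ) (hl : Λ.s l = x.rng) : KPath Λ :=
  mkPath Λ (fun i => (Λ.d l i : ℕ∞) + x.deg i) (cseg Λ l x hl)
    (cseg_h1 Λ l x hl) (cseg_h3 Λ l x hl)

theorem concatPath_deg (l : Mor) (x : KPath Λ) (hl : Λ.s l = x.rng) :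
    (concatPath Λ l x hl).deg = fun i => (Λ.d l i : ℕ∞) + x.deg i := by
  unfold concatPath; rfl

theorem concatPath_dom_c (l : Mor) (x : KPath Λ) {b : Fin k → ℕ}
    (hb : ∀ i, (b i : ℕ∞) ≤ (Λ.d l i : ℕ∞) + x.deg i) :
    x.dom ((b ⊔ Λ.d l) - Λ.d l) := fun i => by
  simpa using he1 (max (b i) (Λ.d l i)) (Λ.d l i) (x.deg i)
    (he5 (b i) (Λ.d l i) _ (hb i) le_self_add)

theorem concatPath_seg0 (l : Mor) (x : KPath Λ) (hl : Λ.s l = x.rng) {b : Fin k → ℕ}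
    (hb : ∀ i, (b i : ℕ∞) ≤ (Λ.d l i : ℕ∞) + x.deg i) :
    (concatPath Λ l x hl).seg 0 b = cseg Λ l x hl b := by
  unfold concatPath; exact mkPath_seg0 Λ hb

end TKG
namespace TKG

open Filter Topology Set
open scoped Classical

variable {k : ℕ} {Obj Mor : Type} [TopologicalSpace Obj] [TopologicalSpace Mor]
variable (Λ : TopKGraph k Obj Mor)

theorem concat_is (l : Mor) (x : KPath Λ) (hl : Λ.s l = x.rng) :
    IsConcatOf l x (concatPath Λ l x hl) := by
  refine ⟨hl, fun i => rfl, ?_, ?_⟩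
  · -- initial segments of l
    intro b hb
    have hble : ∀ i, (b i : ℕ∞) ≤ (fun i => (Λ.d l i : ℕ∞) + x.deg i) i := fun i =>
      le_trans (Nat.cast_le.mpr (hb i)) le_self_add
    have hdom : x.dom ((b ⊔ Λ.d l) - Λ.d l) := concatPath_dom_c Λ l x hble
    have hc0 : Λ.d (x.seg 0 ((b ⊔ Λ.d l) - Λ.d l)) = 0 := by
      rw [d_seg0 Λ hdom]; funext i; simp only [Pi.sub_apply, Pi.sup_apply, Pi.zero_apply]
      have h' : b i ≤ Λ.d l i := hb i; omega
    have hν : Λ.comp l (x.seg 0 ((b ⊔ Λ.d l) - Λ.d l)) (hl.trans (rng_seg0 Λ hdom).symm) = l :=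
      comp_deg0_right Λ _ hc0
    have hseg : (concatPath Λ l x hl).seg 0 b
        = fa Λ b ((b ⊔ Λ.d l) - b) l := by
      rw [concatPath_seg0 Λ l x hl hble, cseg_eq Λ l x hl b hdom]
      exact fa_congr Λ rfl rfl hν
    have hdl : Λ.d l = b + ((b ⊔ Λ.d l) - b) := by
      funext i; simp only [Pi.add_apply, Pi.sub_apply, Pi.sup_apply]
      have h' : b i ≤ Λ.d l i := hb i; omega
    refine ⟨fb Λ b ((b ⊔ Λ.d l) - b) l, ?_, ?_, ?_⟩
    · rw [hseg]; exact s_fa_r_fb Λ hdl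
    · rw [(concatPath Λ l x hl).d_seg 0 b (pize b) hble]
      funext i; simp
    · exact (comp_congr Λ hseg rfl _ (s_fa_r_fb Λ hdl)).trans (comp_fa_fb Λ hdl)
  · -- late segments
    intro b hbl hb
    have hdom : x.dom ((b ⊔ Λ.d l) - Λ.d l) := concatPath_dom_c Λ l x hb
    have hsup : b ⊔ Λ.d l = b := by
      funext i; simp only [Pi.sup_apply]
      have h' : Λ.d l i ≤ b i := hbl i; omega
    have hbd : (b ⊔ Λ.d l) - Λ.d l = b - Λ.d l := by rw [hsup]
    have hdom2 : x.dom (b - Λ.d l) := hbd ▸ hdom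
    refine ⟨hl.trans (rng_seg0 Λ hdom2).symm, ?_⟩
    rw [concatPath_seg0 Λ l x hl hb, cseg_eq Λ l x hl b hdom]
    have hdν : Λ.d (Λ.comp l (x.seg 0 ((b ⊔ Λ.d l) - Λ.d l)) (hl.trans (rng_seg0 Λ hdom).symm)) = b := by
      rw [Λ.d_comp, d_seg0 Λ hdom]
      funext i; simp only [Pi.add_apply, Pi.sub_apply, Pi.sup_apply]
      have h' : Λ.d l i ≤ b i := hbl i; omega
    have h0 : (b ⊔ Λ.d l) - b = 0 := by
      funext i; simp only [Pi.sub_apply, Pi.sup_apply, Pi.zero_apply]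
      have h' : Λ.d l i ≤ b i := hbl i; omega
    rw [fa_congr Λ rfl h0 rfl, (fa_zero_right Λ hdν).1]
    exact comp_congr Λ rfl (by rw [hbd]) _ _

theorem isConcat_deg {l : Mor} {x w : KPath Λ} (hw : IsConcatOf l x w) :
    ∀ i, w.deg i = (Λ.d l i : ℕ∞) + x.deg i := fun i => hw.2.1 i

theorem isConcat_dom_l {l : Mor} {x w : KPath Λ} (hw : IsConcatOf l x w) : w.dom (Λ.d l) :=
  fun i => by rw [hw.2.1 i]; exact le_self_add

theorem isConcat_seg0_eq {l : Mor} {x w : KPath Λ} (hw : IsConcatOf l x w) :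
    w.seg 0 (Λ.d l) = l := by
  obtain ⟨a, ha, hd, hcomp⟩ := hw.2.2.1 (Λ.d l) le_rfl
  have hda : Λ.d a = 0 := by
    have := Λ.d_comp (w.seg 0 (Λ.d l)) a ha
    rw [hcomp, hd] at this
    funext i
    have h2 := congrFun this i
    simp only [Pi.add_apply, Pi.zero_apply] at h2 ⊢
    omega
  conv_rhs => rw [← hcomp]
  exact (comp_deg0_right Λ ha hda).symm

theorem isConcat_rng {l : Mor} {x w : KPath Λ} (hw : IsConcatOf l x w) : w.rng = Λ.r l := by
  obtain ⟨a, ha, hd, hcomp⟩ := hw.2.2.1 0 (pize _)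
  rw [← hcomp, Λ.r_comp]
  exact (rng_seg0 Λ (dom_zero Λ w)).symm

/-- Uniqueness: a path with `IsConcatOf l x` structure is `concatPath l x`. -/
theorem isConcat_unique {l : Mor} {x w : KPath Λ} (hw : IsConcatOf l x w) :
    w = concatPath Λ l x hw.1 := by
  refine KPath.ext' Λ (funext fun i => hw.2.1 i) ?_
  intro b hb
  have hb' : ∀ i, (b i : ℕ∞) ≤ (Λ.d l i : ℕ∞) + x.deg i := fun i => (hw.2.1 i) ▸ hb i
  have hdom : x.dom ((b ⊔ Λ.d l) - Λ.d l) := concatPath_dom_c Λ l x hb'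
  have hwsup : w.dom (b ⊔ Λ.d l) := fun i => by
    rw [hw.2.1 i]
    refine he5 (b i) (Λ.d l i) _ (hb' i) le_self_add
  obtain ⟨pf, hseg⟩ := hw.2.2.2 (b ⊔ Λ.d l) le_sup_right hwsup
  have hbsup : b ≤ b ⊔ Λ.d l := fun i => by simp only [Pi.sup_apply]; omega
  have hfa := (seg0_fa Λ hbsup hwsup).1
  rw [hfa, hseg, concatPath_seg0 Λ l x hw.1 hb', cseg_eq Λ l x hw.1 b hdom]

/-- The tail segments of a concatenation are segments of `x`. -/
theorem isConcat_tail {l : Mor} {x w : KPath Λ} (hw : IsConcatOf l x w) {c : Fin k → ℕ}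
    (hc : x.dom c) : w.seg (Λ.d l) (Λ.d l + c) = x.seg 0 c := by
  have hwdom : w.dom (Λ.d l + c) := fun i => by
    rw [hw.2.1 i]
    have hco : ((Λ.d l + c) i : ℕ∞) = (Λ.d l i : ℕ∞) + (c i : ℕ∞) := by
      simp [ENat.coe_add]
    rw [hco]; exact add_le_add le_rfl (hc i)
  obtain ⟨pf, hseg⟩ := hw.2.2.2 (Λ.d l + c) (fun i => le_self_add) hwdom
  have hfb := (seg0_fa Λ (le_self_add : Λ.d l ≤ Λ.d l + c) hwdom).2
  rw [hfb, hseg]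
  have hsub : Λ.d l + c - Λ.d l = c := by funext i; simp
  have hd2 : Λ.d (Λ.comp l (x.seg 0 (Λ.d l + c - Λ.d l)) pf) = Λ.d l + (Λ.d l + c - Λ.d l) := by
    rw [Λ.d_comp, d_seg0 Λ (by rw [hsub]; exact hc)]
  exact ((fpair_unique Λ pf rfl rfl (by rw [d_seg0 Λ (by rw [hsub]; exact hc)])).2).trans
    (by rw [hsub])

end TKG
namespace TKG

open Filter Topology Set
open scoped Classical

variable {k : ℕ} {Obj Mor : Type} [TopologicalSpace Obj] [TopologicalSpace Mor]
variable (Λ : TopKGraph k Obj Mor)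

theorem concatPath_congr {l l' : Mor} {x x' : KPath Λ} (hl : l = l') (hx : x = x')
    (h : Λ.s l = x.rng) (h' : Λ.s l' = x'.rng) :
    concatPath Λ l x h = concatPath Λ l' x' h' := by subst hl; subst hx; rfl

theorem split_at (x : KPath Λ) {c : Fin k → ℕ} (hc : x.dom c) :
    ∃ hs : Λ.s (x.seg 0 c) = (shiftPath Λ x c hc).rng,
      x = concatPath Λ (x.seg 0 c) (shiftPath Λ x c hc) hs := by
  have hs : Λ.s (x.seg 0 c) = (shiftPath Λ x c hc).rng := by
    rw [shiftPath_rng]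
    exact (x.seg_comp 0 c c (pize c) le_rfl hc).choose
  refine ⟨hs, ?_⟩
  have hcon : IsConcatOf (x.seg 0 c) (shiftPath Λ x c hc) x := by
    have hdc : Λ.d (x.seg 0 c) = c := d_seg0 Λ hc
    refine ⟨hs, ?_, ?_, ?_⟩
    · intro i
      rw [hdc, shiftPath_deg]
      exact (he2 (c i) (x.deg i) (hc i)).symm
    · intro b hb
      rw [hdc] at hb
      have hdb : x.dom b := dom_mono Λ hb hc
      obtain ⟨h1, h2⟩ := x.seg_comp 0 b c (pize b) hb hc
      exact ⟨x.seg b c, h1, d_seg0 Λ hdb, h2⟩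
    · intro b hb hdb
      rw [hdc] at hb
      have hbx : x.dom b := hdb
      have hsub : ∀ i, ((b - Λ.d (x.seg 0 c)) i : ℕ∞) ≤ x.deg i - (c i : ℕ∞) := by
        intro i
        rw [hdc]
        simpa using he6 (c i) (b i) (x.deg i) (hc i) (hbx i) (hb i)
      have hseg : (shiftPath Λ x c hc).seg 0 (b - Λ.d (x.seg 0 c)) = x.seg c (c + (b - Λ.d (x.seg 0 c))) :=
        shiftPath_seg0 Λ x c hc hsub
      have hcb : c + (b - Λ.d (x.seg 0 c)) = b := by
        rw [hdc]; funext i; simp only [Pi.add_apply, Pi.sub_apply]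
        have h' : c i ≤ b i := hb i; omega
      obtain ⟨h1, h2⟩ := x.seg_comp 0 c b (pize c) (fun i => hb i) hbx
      have hpf : Λ.s (x.seg 0 c) = Λ.r ((shiftPath Λ x c hc).seg 0 (b - Λ.d (x.seg 0 c))) := by
        rw [hseg, hcb]; exact h1
      refine ⟨hpf, ?_⟩
      rw [← h2]
      exact (comp_congr Λ rfl (by rw [hseg, hcb]) _ _).symm
  exact isConcat_unique Λ hcon

theorem concat_concat (g h : Mor) (hgh : Λ.s g = Λ.r h) (x : KPath Λ) (hx : Λ.s h = x.rng)
    (h2 : Λ.s (Λ.comp g h hgh) = x.rng) (h3 : Λ.s g = (concatPath Λ h x hx).rng) :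
    concatPath Λ (Λ.comp g h hgh) x h2 = concatPath Λ g (concatPath Λ h x hx) h3 := by
  have hD : Λ.d (Λ.comp g h hgh) = Λ.d g + Λ.d h := Λ.d_comp g h hgh
  refine (isConcat_unique Λ (l := g) (x := concatPath Λ h x hx)
    (w := concatPath Λ (Λ.comp g h hgh) x h2) ⟨h3, ?_, ?_, ?_⟩).trans
    (concatPath_congr Λ rfl rfl _ h3)
  · -- degrees
    intro i
    show (fun i => (Λ.d (Λ.comp g h hgh) i : ℕ∞) + x.deg i) i
      = (Λ.d g i : ℕ∞) + (fun i => (Λ.d h i : ℕ∞) + x.deg i) i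
    simp only
    rw [hD]
    push_cast [Pi.add_apply]
    rw [add_assoc]
  · -- initial segments of g
    intro b hb
    have hbD : b ≤ Λ.d (Λ.comp g h hgh) := by
      rw [hD]; intro i; simp only [Pi.add_apply]
      exact le_trans (hb i) (Nat.le_add_right _ _)
    obtain ⟨a0, ha0, hd0, hcomp0⟩ := (concat_is Λ (Λ.comp g h hgh) x h2).2.2.1 b hbD
    have hWfa : (concatPath Λ (Λ.comp g h hgh) x h2).seg 0 b
        = fa Λ b (Λ.d (Λ.comp g h hgh) - b) (Λ.comp g h hgh) := by
      have hda0 : Λ.d a0 = Λ.d (Λ.comp g h hgh) - b := by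
        have hh := Λ.d_comp ((concatPath Λ (Λ.comp g h hgh) x h2).seg 0 b) a0 ha0
        rw [hcomp0, hd0] at hh
        funext i
        have h2' := congrFun hh i
        simp only [Pi.add_apply, Pi.sub_apply] at h2' ⊢
        omega
      exact ((fpair_unique Λ ha0 hcomp0 hd0 hda0).1).symm
    have hgfac : Λ.d g = b + (Λ.d g - b) := by
      funext i; simp only [Pi.add_apply, Pi.sub_apply]
      have h' : b i ≤ Λ.d g i := hb i; omega
    have hcmid : Λ.s (fb Λ b (Λ.d g - b) g) = Λ.r h := by rw [s_fb Λ hgfac]; exact hgh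
    have hcfa : Λ.s (fa Λ b (Λ.d g - b) g) = Λ.r (Λ.comp (fb Λ b (Λ.d g - b) g) h hcmid) := by
      rw [Λ.r_comp]; exact s_fa_r_fb Λ hgfac
    have hassoc : Λ.comp (fa Λ b (Λ.d g - b) g) (Λ.comp (fb Λ b (Λ.d g - b) g) h hcmid) hcfa
        = Λ.comp g h hgh := by
      rw [← Λ.comp_assoc _ _ _ (s_fa_r_fb Λ hgfac) hcmid
        (by rw [comp_fa_fb Λ hgfac]; exact hgh) hcfa]
      exact comp_congr Λ (comp_fa_fb Λ hgfac) rfl _ _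
    have hdtail : Λ.d (Λ.comp (fb Λ b (Λ.d g - b) g) h hcmid) = Λ.d (Λ.comp g h hgh) - b := by
      rw [Λ.d_comp, d_fb Λ hgfac, hD]
      funext i; simp only [Pi.add_apply, Pi.sub_apply]
      have h' : b i ≤ Λ.d g i := hb i; omega
    have hkey : fa Λ b (Λ.d (Λ.comp g h hgh) - b) (Λ.comp g h hgh) = fa Λ b (Λ.d g - b) g :=
      (fpair_unique Λ hcfa hassoc (d_fa Λ hgfac) hdtail).1
    refine ⟨fb Λ b (Λ.d g - b) g, ?_, hd0, ?_⟩
    · rw [hWfa, hkey]; exact s_fa_r_fb Λ hgfac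
    · exact (comp_congr Λ (hWfa.trans hkey) rfl _ (s_fa_r_fb Λ hgfac)).trans (comp_fa_fb Λ hgfac)
  · -- late segments
    intro b hgb hbW
    have hbW' : ∀ i, (b i : ℕ∞) ≤ (Λ.d (Λ.comp g h hgh) i : ℕ∞) + x.deg i := fun i => hbW i
    have hdomc1 : x.dom ((b ⊔ Λ.d (Λ.comp g h hgh)) - Λ.d (Λ.comp g h hgh)) :=
      concatPath_dom_c Λ (Λ.comp g h hgh) x hbW'
    have hWseg : (concatPath Λ (Λ.comp g h hgh) x h2).seg 0 b
        = fa Λ b ((b ⊔ Λ.d (Λ.comp g h hgh)) - b)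
        (Λ.comp (Λ.comp g h hgh) (x.seg 0 ((b ⊔ Λ.d (Λ.comp g h hgh)) - Λ.d (Λ.comp g h hgh)))
          (h2.trans (rng_seg0 Λ hdomc1).symm)) := by
      rw [concatPath_seg0 Λ _ x h2 hbW', cseg_eq Λ _ x h2 b hdomc1]
    have hc2dom : ∀ i, ((b - Λ.d g) i : ℕ∞) ≤ (Λ.d h i : ℕ∞) + x.deg i := by
      intro i
      have h1' := hbW' i
      rw [hD] at h1'
      simp only [Pi.sub_apply]
      cases hxe : x.deg i using ENat.recTopCoe with
      | top => exact le_top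
      | coe e =>
        rw [hxe] at h1'
        rw [← ENat.coe_add, Nat.cast_le] at h1'
        rw [← ENat.coe_add, Nat.cast_le]
        simp only [Pi.add_apply] at h1'
        have h'' : Λ.d g i ≤ b i := hgb i
        omega
    have hdomc3 : x.dom (((b - Λ.d g) ⊔ Λ.d h) - Λ.d h) := concatPath_dom_c Λ h x hc2dom
    have hYdom : (concatPath Λ h x hx).dom (b - Λ.d g) := fun i => hc2dom i
    have hYseg : (concatPath Λ h x hx).seg 0 (b - Λ.d g)
        = fa Λ (b - Λ.d g) (((b - Λ.d g) ⊔ Λ.d h) - (b - Λ.d g))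
        (Λ.comp h (x.seg 0 (((b - Λ.d g) ⊔ Λ.d h) - Λ.d h)) (hx.trans (rng_seg0 Λ hdomc3).symm)) := by
      rw [concatPath_seg0 Λ h x hx hc2dom, cseg_eq Λ h x hx (b - Λ.d g) hdomc3]
    have hc31 : ((b - Λ.d g) ⊔ Λ.d h) - Λ.d h = (b ⊔ Λ.d (Λ.comp g h hgh)) - Λ.d (Λ.comp g h hgh) := by
      rw [hD]; funext i
      simp only [Pi.sub_apply, Pi.sup_apply, Pi.add_apply]
      have h' : Λ.d g i ≤ b i := hgb i; omega
    have hP : Λ.s h = Λ.r (x.seg 0 (((b - Λ.d g) ⊔ Λ.d h) - Λ.d h)) :=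
      hx.trans (rng_seg0 Λ hdomc3).symm
    have hdP : Λ.d (Λ.comp h (x.seg 0 (((b - Λ.d g) ⊔ Λ.d h) - Λ.d h)) hP)
        = (b - Λ.d g) + (((b - Λ.d g) ⊔ Λ.d h) - (b - Λ.d g)) := by
      rw [Λ.d_comp, d_seg0 Λ hdomc3]
      funext i; simp only [Pi.add_apply, Pi.sub_apply, Pi.sup_apply]; omega
    have hcgP : Λ.s g = Λ.r (Λ.comp h (x.seg 0 (((b - Λ.d g) ⊔ Λ.d h) - Λ.d h)) hP) := by
      rw [Λ.r_comp]; exact hgh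
    obtain ⟨pf', hfc1, _⟩ := fac_comp_left Λ hcgP hdP
    -- comp g P = comp (comp g h) (x.seg 0 c1)
    have hassoc2 : Λ.comp g (Λ.comp h (x.seg 0 (((b - Λ.d g) ⊔ Λ.d h) - Λ.d h)) hP) hcgP
        = Λ.comp (Λ.comp g h hgh) (x.seg 0 ((b ⊔ Λ.d (Λ.comp g h hgh)) - Λ.d (Λ.comp g h hgh)))
          (h2.trans (rng_seg0 Λ hdomc1).symm) := by
      rw [← Λ.comp_assoc g h (x.seg 0 (((b - Λ.d g) ⊔ Λ.d h) - Λ.d h)) hgh hP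
        (by rw [Λ.s_comp]; exact hP) hcgP]
      exact comp_congr Λ rfl (by rw [hc31]) _ _
    -- index identities for the fa's
    have hi1 : Λ.d g + (b - Λ.d g) = b := by
      funext i; simp only [Pi.add_apply, Pi.sub_apply]
      have h' : Λ.d g i ≤ b i := hgb i; omega
    have hi2 : ((b - Λ.d g) ⊔ Λ.d h) - (b - Λ.d g) = (b ⊔ Λ.d (Λ.comp g h hgh)) - b := by
      rw [hD]; funext i
      simp only [Pi.sub_apply, Pi.sup_apply, Pi.add_apply]
      have h' : Λ.d g i ≤ b i := hgb i; omega
    have pf : Λ.s g = Λ.r ((concatPath Λ h x hx).seg 0 (b - Λ.d g)) := by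
      rw [rng_seg0 Λ hYdom, isConcat_rng Λ (concat_is Λ h x hx)]
      exact hgh
    refine ⟨pf, ?_⟩
    rw [hWseg]
    have step1 : fa Λ b ((b ⊔ Λ.d (Λ.comp g h hgh)) - b)
        (Λ.comp (Λ.comp g h hgh) (x.seg 0 ((b ⊔ Λ.d (Λ.comp g h hgh)) - Λ.d (Λ.comp g h hgh)))
          (h2.trans (rng_seg0 Λ hdomc1).symm))
        = Λ.comp g (fa Λ (b - Λ.d g) (((b - Λ.d g) ⊔ Λ.d h) - (b - Λ.d g))
            (Λ.comp h (x.seg 0 (((b - Λ.d g) ⊔ Λ.d h) - Λ.d h)) hP)) pf' :=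
      ((fa_congr Λ hi1 hi2 hassoc2).symm).trans hfc1
    rw [step1]
    exact comp_congr Λ rfl hYseg.symm _ _

end TKG
namespace TKG

open Filter Topology Set
open scoped Classical

variable {k : ℕ} {Obj Mor : Type} [TopologicalSpace Obj] [TopologicalSpace Mor]
variable (Λ : TopKGraph k Obj Mor)

/-- Splitting a concatenation at an intermediate factorization. -/
theorem split_lemma {l : Mor} {x w : KPath Λ} (hw : IsConcatOf l x w)
    {c : Fin k → ℕ} (hcx : x.dom c)
    {α δ : Mor} (hδcomp : Λ.s α = Λ.r δ)
    (h' : Λ.s l = Λ.r (x.seg 0 c))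
    (hfac : Λ.comp α δ hδcomp = Λ.comp l (x.seg 0 c) h')
    (hs : Λ.s δ = (shiftPath Λ x c hcx).rng) :
    IsConcatOf α (concatPath Λ δ (shiftPath Λ x c hcx) hs) w := by
  obtain ⟨hs1, hxe⟩ := split_at Λ x hcx
  have hw1 : w = concatPath Λ l x hw.1 := isConcat_unique Λ hw
  have hl2 : Λ.s l = (concatPath Λ (x.seg 0 c) (shiftPath Λ x c hcx) hs1).rng := by
    rw [← hxe]; exact hw.1
  have hw2 : w = concatPath Λ l (concatPath Λ (x.seg 0 c) (shiftPath Λ x c hcx) hs1) hl2 :=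
    hw1.trans (concatPath_congr Λ rfl hxe _ _)
  have hccomp : Λ.s (Λ.comp l (x.seg 0 c) h') = (shiftPath Λ x c hcx).rng := by
    rw [Λ.s_comp]; exact hs1
  have hw3 : w = concatPath Λ (Λ.comp l (x.seg 0 c) h') (shiftPath Λ x c hcx) hccomp :=
    hw2.trans (concat_concat Λ l (x.seg 0 c) h' (shiftPath Λ x c hcx) hs1 hccomp hl2).symm
  have hαcomp : Λ.s (Λ.comp α δ hδcomp) = (shiftPath Λ x c hcx).rng := by rw [Λ.s_comp, hs]
  have hw4 : w = concatPath Λ (Λ.comp α δ hδcomp) (shiftPath Λ x c hcx) hαcomp :=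
    hw3.trans (concatPath_congr Λ hfac.symm rfl _ _)
  have hαY : Λ.s α = (concatPath Λ δ (shiftPath Λ x c hcx) hs).rng := by
    rw [isConcat_rng Λ (concat_is Λ δ (shiftPath Λ x c hcx) hs)]; exact hδcomp
  have hw5 : w = concatPath Λ α (concatPath Λ δ (shiftPath Λ x c hcx) hs) hαY :=
    hw4.trans (concat_concat Λ α δ hδcomp (shiftPath Λ x c hcx) hs hαcomp hαY)
  rw [hw5]
  exact concat_is Λ α _ hαY

end TKG
open TKG Filter Topology Set in
/-- In a compactly aligned topological `k`-graph, for `p, q ∈ ℕ^k` and compact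
`U ⊆ Λ^p`, `V ⊆ Λ^q`, the set `Z(U *ₛ V, p - q)` is compact in the path groupoid. -/
theorem zg_compact_of_compact
    {k : ℕ} {Obj Mor : Type} [TopologicalSpace Obj] [TopologicalSpace Mor]
    (Λ : TopKGraph k Obj Mor) (hΛ : CompactlyAligned Λ)
    (p q : Fin k → ℕ) (U V : Set Mor)
    (hU : U ⊆ {f | Λ.d f = p}) (hV : V ⊆ {f | Λ.d f = q})
    (hUc : IsCompact U) (hVc : IsCompact V) :
    @IsCompact _ (groupoidTopology Λ)
      (ZG Λ ((U ×ˢ V) ∩ {lm | Λ.s lm.1 = Λ.s lm.2})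
        (fun i => (p i : ℤ) - (q i : ℤ))) := by
  classical
  haveI := Λ.t2Mor
  haveI := Λ.t2Obj
  haveI := Λ.locallyCompactMor
  letI : TopologicalSpace (GTriple Λ) := groupoidTopology Λ
  set m₀ : Fin k → ℤ := fun i => (p i : ℤ) - (q i : ℤ) with hm₀def
  set K : Set (GTriple Λ) := ZG Λ ((U ×ˢ V) ∩ {lm | Λ.s lm.1 = Λ.s lm.2}) m₀ with hKdef
  show IsCompact K
  rw [isCompact_iff_ultrafilter_le_nhds]
  intro f hf
  have hKf : K ∈ f := le_principal_iff.mp hf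
  -- abbreviations
  set lmap : GTriple Λ → Mor := fun t => t.1.seg 0 p with hlmap
  set mmap : GTriple Λ → Mor := fun t => t.2.2.seg 0 q with hmmap
  set gmap : (Fin k → ℕ) → GTriple Λ → Mor := fun c t => t.1.seg 0 (p + c) with hgmap
  set hmap : (Fin k → ℕ) → GTriple Λ → Mor := fun c t => t.2.2.seg 0 (q + c) with hhmap
  -- pointwise structure of elements of K
  have hKprop : ∀ t ∈ K, t.2.1 = m₀ ∧ lmap t ∈ U ∧ mmap t ∈ V ∧
      Λ.s (lmap t) = Λ.s (mmap t) ∧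
      ∃ x : KPath Λ, IsConcatOf (lmap t) x t.1 ∧ IsConcatOf (mmap t) x t.2.2 := by
    intro t ht
    obtain ⟨hm, lm, hlmF, hss, hdeq, x, hx1, hx2⟩ := ht
    obtain ⟨⟨hU1, hV1⟩, -⟩ := hlmF
    have hd1 : Λ.d lm.1 = p := hU hU1
    have hd2 : Λ.d lm.2 = q := hV hV1
    have he1 : lmap t = lm.1 := by
      show t.1.seg 0 p = lm.1
      rw [← hd1]; exact isConcat_seg0_eq Λ hx1
    have he2 : mmap t = lm.2 := by
      show t.2.2.seg 0 q = lm.2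
      rw [← hd2]; exact isConcat_seg0_eq Λ hx2
    exact ⟨hm, by rw [he1]; exact hU1, by rw [he2]; exact hV1,
      by rw [he1, he2]; exact hss, x, by rw [he1]; exact hx1, by rw [he2]; exact hx2⟩
  -- limit of the U-components
  obtain ⟨lam, hlamU, hlam⟩ : ∃ lam ∈ U, Tendsto lmap (↑f) (𝓝 lam) := by
    obtain ⟨lam, h1, h2⟩ := hUc.ultrafilter_le_nhds (f.map lmap)
      (le_principal_iff.mpr (mem_map.mpr (mem_of_superset hKf fun t ht => (hKprop t ht).2.1)))
    exact ⟨lam, h1, h2⟩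
  obtain ⟨mu, hmuV, hmu⟩ : ∃ mu ∈ V, Tendsto mmap (↑f) (𝓝 mu) := by
    obtain ⟨mu, h1, h2⟩ := hVc.ultrafilter_le_nhds (f.map mmap)
      (le_principal_iff.mpr (mem_map.mpr (mem_of_superset hKf fun t ht => (hKprop t ht).2.2.1)))
    exact ⟨mu, h1, h2⟩
  have hdlam : Λ.d lam = p := hU hlamU
  have hdmu : Λ.d mu = q := hV hmuV
  have hslam : Λ.s lam = Λ.s mu := by
    refine tendsto_nhds_unique (f := fun t => Λ.s (lmap t)) (l := (↑f : Filter (GTriple Λ)))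
      (Λ.continuous_s.continuousAt.tendsto.comp hlam) ?_
    refine Tendsto.congr' ?_ (Λ.continuous_s.continuousAt.tendsto.comp hmu)
    exact eventually_of_mem hKf fun t ht => ((hKprop t ht).2.2.2.1).symm
  -- domains and goodness
  set DomS : (Fin k → ℕ) → Set (GTriple Λ) :=
    fun c => {t | t ∈ K ∧ ∀ i, ((p i + c i : ℕ) : ℕ∞) ≤ t.1.deg i} with hDomS
  set Good : (Fin k → ℕ) → Prop :=
    fun c => DomS c ∈ f ∧ ∃ ν, Tendsto (gmap c) (↑f) (𝓝 ν) with hGoodDef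
  have hDomd : ∀ c, ∀ t ∈ DomS c, Λ.d (gmap c t) = p + c := by
    intro c t ht
    exact d_seg0 Λ (fun i => ht.2 i)
  have hp0 : p + (0 : Fin k → ℕ) = p := by funext i; simp
  have hg0l : gmap 0 = lmap := by
    funext t
    show t.1.seg 0 (p + 0) = t.1.seg 0 p
    rw [hp0]
  have hGood0 : Good 0 := by
    constructor
    · refine mem_of_superset hKf ?_
      intro t ht
      refine ⟨ht, fun i => ?_⟩
      obtain ⟨-, hUm, -, -, x, hx1, -⟩ := hKprop t ht
      have hdl : Λ.d (lmap t) = p := hU hUm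
      rw [hx1.2.1 i, hdl]
      simp only [Pi.zero_apply, add_zero]
      exact le_self_add
    · exact ⟨lam, by rw [hg0l]; exact hlam⟩
  have hGoodMono : ∀ c c', c ≤ c' → Good c' → Good c := by
    intro c c' hcc hg'
    obtain ⟨hdom', ν', hν'⟩ := hg'
    have hsub : DomS c' ⊆ DomS c := fun t ht =>
      ⟨ht.1, fun i => le_trans (Nat.cast_le.mpr (by have hcx : c i ≤ c' i := hcc i; omega)) (ht.2 i)⟩
    have hi1 : (p + c) + ((p + c') - (p + c)) = p + c' := by
      funext i; simp only [Pi.add_apply, Pi.sub_apply]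
      have hcx : c i ≤ c' i := hcc i; omega
    have hd0 : Λ.d ν' = p + c' :=
      (isClosed_deg Λ (p + c')).mem_of_tendsto hν' (eventually_of_mem hdom' (hDomd c'))
    have hdν' : Λ.d ν' = (p + c) + ((p + c') - (p + c)) := by rw [hd0, hi1]
    have hfab := (tendsto_fab Λ hν' hdν'
      (eventually_of_mem hdom' (fun t ht => by rw [hDomd c' t ht, hi1]))).1
    refine ⟨mem_of_superset hdom' hsub, fa Λ (p + c) ((p + c') - (p + c)) ν', ?_⟩
    refine Tendsto.congr' ?_ hfab
    refine eventually_of_mem hdom' fun t ht => ?_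
    exact ((seg0_fa Λ (r := p + c) (r' := p + c')
      (fun i => by simp only [Pi.add_apply]; have hcx : c i ≤ c' i := hcc i; omega)
      (fun i => ht.2 i)).1).symm
  have hGoodSup : ∀ c c', Good c → Good c' → Good (c ⊔ c') := by
    intro c c' hg hg'
    obtain ⟨hdom, ν, hν⟩ := hg
    obtain ⟨hdom', ν', hν'⟩ := hg'
    obtain ⟨N, hNc, hNν⟩ := exists_compact_mem_nhds ν
    obtain ⟨N', hN'c, hN'ν⟩ := exists_compact_mem_nhds ν'
    set N₁ : Set Mor := N ∩ {g | Λ.d g = p + c} with hN₁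
    set N₁' : Set Mor := N' ∩ {g | Λ.d g = p + c'} with hN₁'
    have hN₁c : IsCompact N₁ := hNc.inter_right (isClosed_deg Λ (p + c))
    have hN₁'c : IsCompact N₁' := hN'c.inter_right (isClosed_deg Λ (p + c'))
    set E : Set (GTriple Λ) := (DomS c ∩ DomS c') ∩ (gmap c ⁻¹' N ∩ gmap c' ⁻¹' N') with hE
    have hEf : E ∈ f := by
      refine inter_mem (inter_mem hdom hdom') (inter_mem ?_ ?_)
      · exact hν hNν
      · exact hν' hN'ν
    have hEdom : ∀ t ∈ E, t ∈ DomS (c ⊔ c') := by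
      rintro t ⟨⟨ht1, ht2⟩, -⟩
      refine ⟨ht1.1, fun i => ?_⟩
      have h1 := ht1.2 i
      have h2 := ht2.2 i
      have : ((p i + (c ⊔ c') i : ℕ) : ℕ∞) = ((max (p i + c i) (p i + c' i) : ℕ) : ℕ∞) := by
        simp only [Pi.sup_apply]; congr 1; omega
      rw [this]
      exact he5 _ _ _ h1 h2
    have hsupidx : p + (c ⊔ c') = (p + c) ⊔ (p + c') := by
      funext i; simp only [Pi.add_apply, Pi.sup_apply]; omega
    have hmce : ∀ t ∈ E, gmap (c ⊔ c') t ∈ MCE Λ N₁ N₁' := by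
      rintro t ⟨⟨ht1, ht2⟩, hn1, hn2⟩
      have htsup := hEdom t ⟨⟨ht1, ht2⟩, hn1, hn2⟩
      have hd1 : Λ.d (gmap c t) = p + c := hDomd c t ht1
      have hd2 : Λ.d (gmap c' t) = p + c' := hDomd c' t ht2
      have hdsup : Λ.d (gmap (c ⊔ c') t) = p + (c ⊔ c') := hDomd (c ⊔ c') t htsup
      refine ⟨gmap c t, ⟨hn1, hd1⟩, gmap c' t, ⟨hn2, hd2⟩, ?_, ?_, ?_⟩
      · rw [hdsup, hd1, hd2, hsupidx]
      · obtain ⟨h1, h2⟩ := t.1.seg_comp 0 (p + c) (p + (c ⊔ c'))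
          (pize _) (fun i => by simp only [Pi.add_apply, Pi.sup_apply]; omega)
          (fun i => htsup.2 i)
        exact ⟨t.1.seg (p + c) (p + (c ⊔ c')), h1, h2⟩
      · obtain ⟨h1, h2⟩ := t.1.seg_comp 0 (p + c') (p + (c ⊔ c'))
          (pize _) (fun i => by simp only [Pi.add_apply, Pi.sup_apply]; omega)
          (fun i => htsup.2 i)
        exact ⟨t.1.seg (p + c') (p + (c ⊔ c')), h1, h2⟩
    have hMCEc : IsCompact (MCE Λ N₁ N₁') :=
      hΛ (p + c) (p + c') N₁ N₁' (fun g hg => hg.2) (fun g hg => hg.2) hN₁c hN₁'c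
    obtain ⟨ν'', hν''mem, hν''⟩ := hMCEc.ultrafilter_le_nhds (f.map (gmap (c ⊔ c')))
      (le_principal_iff.mpr (mem_map.mpr (mem_of_superset hEf hmce)))
    exact ⟨mem_of_superset hEf hEdom, ν'', hν''⟩
  -- the limiting morphisms
  set nu : (Fin k → ℕ) → Mor := fun c => if h : Good c then h.2.choose else lam with hnu
  have hνlim : ∀ c, Good c → Tendsto (gmap c) (↑f) (𝓝 (nu c)) := by
    intro c h
    have he : nu c = h.2.choose := by rw [hnu]; beta_reduce; rw [dif_pos h]
    rw [he]; exact h.2.choose_spec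
  have hdν : ∀ c, Good c → Λ.d (nu c) = p + c := by
    intro c h
    refine (isClosed_deg Λ (p + c)).mem_of_tendsto (hνlim c h) ?_
    exact eventually_of_mem h.1 (hDomd c)
  have hν0 : nu 0 = lam := by
    refine tendsto_nhds_unique (hνlim 0 hGood0) ?_
    rw [hg0l]; exact hlam
  have hfaν : ∀ c, Good c → fa Λ p c (nu c) = lam := by
    intro c hg
    have hd : Λ.d (nu c) = p + c := hdν c hg
    have hfab := (tendsto_fab Λ (hνlim c hg) hd (eventually_of_mem hg.1 (hDomd c))).1
    refine tendsto_nhds_unique ?_ hlam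
    refine Tendsto.congr' ?_ hfab
    refine eventually_of_mem hg.1 fun t ht => ?_
    have hfa := (seg0_fa Λ (r := p) (r' := p + c) le_self_add (fun i => ht.2 i)).1
    have hic : (p + c) - p = c := by funext i; simp
    exact (fa_congr Λ rfl hic rfl).symm.trans hfa.symm
  have hννrel : ∀ c c', c ≤ c' → Good c → Good c' → fa Λ (p + c) (c' - c) (nu c') = nu c := by
    intro c c' hcc hg hg'
    have hi1 : (p + c) + (c' - c) = p + c' := by
      funext i; simp only [Pi.add_apply, Pi.sub_apply]
      have hcx : c i ≤ c' i := hcc i; omega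
    have hdν' : Λ.d (nu c') = (p + c) + (c' - c) := by rw [hdν c' hg', hi1]
    have hfab := (tendsto_fab Λ (hνlim c' hg') hdν'
      (eventually_of_mem hg'.1 (fun t ht => by rw [hDomd c' t ht, hi1]))).1
    refine tendsto_nhds_unique ?_ (hνlim c hg)
    refine Tendsto.congr' ?_ hfab
    refine eventually_of_mem hg'.1 fun t ht => ?_
    have hfa := (seg0_fa Λ (r := p + c) (r' := p + c')
      (fun i => by simp only [Pi.add_apply]; have hcx : c i ≤ c' i := hcc i; omega)
      (fun i => ht.2 i)).1
    have hic : (p + c') - (p + c) = c' - c := by funext i; simp only [Pi.add_apply, Pi.sub_apply]; omega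
    exact (fa_congr Λ rfl hic rfl).symm.trans hfa.symm
  -- the limit path z
  set degz : Fin k → ℕ∞ := fun i => ⨆ (c : Fin k → ℕ) (_ : Good c), (c i : ℕ∞) with hdegz
  have hGoodLe : ∀ c, Good c → ∀ i, (c i : ℕ∞) ≤ degz i := by
    intro c h i
    rw [hdegz]
    exact le_iSup₂ (f := fun c _ => ((c i : ℕ∞))) c h
  have hGoodOfLe : ∀ c, (∀ i, (c i : ℕ∞) ≤ degz i) → Good c := by
    intro c hc
    have hex : ∀ i, ∃ c', Good c' ∧ c i ≤ c' i := by
      intro i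
      rcases Nat.eq_zero_or_pos (c i) with h0 | h0
      · exact ⟨0, hGood0, by omega⟩
      by_contra hcon
      push_neg at hcon
      have hub : degz i ≤ ((c i - 1 : ℕ) : ℕ∞) := by
        rw [hdegz]
        refine iSup₂_le fun c' hgc' => ?_
        have h2 := hcon c' hgc'
        exact Nat.cast_le.mpr (by omega)
      have h3 := le_trans (hc i) hub
      rw [Nat.cast_le] at h3
      omega
    choose cc hccG hcci using hex
    have hbot : Good (⊥ : Fin k → ℕ) := hGood0
    have hsupG : Good (Finset.univ.sup cc) := by
      refine Finset.sup_induction hbot ?_ ?_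
      · intro a ha b hb
        exact hGoodSup a b ha hb
      · intro i _
        exact hccG i
    refine hGoodMono c (Finset.univ.sup cc) ?_ hsupG
    intro i
    have hle : cc i ≤ Finset.univ.sup cc := Finset.le_sup (f := cc) (Finset.mem_univ i)
    exact le_trans (hcci i) (hle i)
  have hzh1 : ∀ c, (∀ i, (c i : ℕ∞) ≤ degz i) → Λ.d (fb Λ p c (nu c)) = c := by
    intro c hc
    exact d_fb Λ (hdν c (hGoodOfLe c hc))
  have hzh3 : ∀ c c', c ≤ c' → (∀ i, (c' i : ℕ∞) ≤ degz i) →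
      fa Λ c (c' - c) (fb Λ p c' (nu c')) = fb Λ p c (nu c) := by
    intro c c' hcc hc'
    have hg' : Good c' := hGoodOfLe c' hc'
    have hg : Good c := hGoodMono c c' hcc hg'
    have hsplit : Λ.d (nu c') = p + c + (c' - c) := by
      rw [hdν c' hg']
      funext i; simp only [Pi.add_apply, Pi.sub_apply]
      have h' : c i ≤ c' i := hcc i; omega
    have h21 := (fac_assoc Λ (m := p) (n := c) (u := c' - c) (f := nu c') hsplit).2.1
    have hi : c + (c' - c) = c' := by
      funext i; simp only [Pi.add_apply, Pi.sub_apply]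
      have hcx : c i ≤ c' i := hcc i; omega
    rw [hi] at h21
    rw [h21, hννrel c c' hcc hg hg']
  set z : KPath Λ := mkPath Λ degz (fun c => fb Λ p c (nu c)) hzh1 hzh3 with hz
  have hzseg : ∀ c, (∀ i, (c i : ℕ∞) ≤ degz i) → z.seg 0 c = fb Λ p c (nu c) := by
    intro c hc
    rw [hz]; exact mkPath_seg0 Λ hc
  have hrngz : Λ.s lam = z.rng := by
    show Λ.s lam = Λ.r (z.seg 0 0)
    rw [hzseg 0 (fun i => by simp), hν0, (fa_zero_right Λ hdlam).2, Λ.r_ident]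
  have hrngz' : Λ.s mu = z.rng := hslam ▸ hrngz
  have hcompν : ∀ c (hc : ∀ i, (c i : ℕ∞) ≤ degz i) (pf : Λ.s lam = Λ.r (z.seg 0 c)),
      Λ.comp lam (z.seg 0 c) pf = nu c := by
    intro c hc pf
    have hg : Good c := hGoodOfLe c hc
    rw [comp_congr Λ (hfaν c hg).symm (by rw [hzseg c hc]) pf (s_fa_r_fb Λ (hdν c hg))]
    exact comp_fa_fb Λ (hdν c hg)
  -- the candidate limit point
  set T : GTriple Λ := (concatPath Λ lam z hrngz, m₀, concatPath Λ mu z hrngz') with hT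
  have hTK : T ∈ K := by
    refine ⟨rfl, (lam, mu), ⟨⟨hlamU, hmuV⟩, hslam⟩, hslam, ?_, z,
      concat_is Λ lam z hrngz, concat_is Λ mu z hrngz'⟩
    rw [hm₀def]
    funext i
    show (Λ.d lam i : ℤ) - (Λ.d mu i : ℤ) = _
    rw [hdlam, hdmu]
  -- pointwise relation between the two sides on `DomS c`
  have hKrel : ∀ c, ∀ t ∈ DomS c, ∃ (x : KPath Λ) (_ : x.dom c),
      IsConcatOf (lmap t) x t.1 ∧ IsConcatOf (mmap t) x t.2.2 ∧
      Λ.d (lmap t) = p ∧ Λ.d (mmap t) = q ∧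
      (∀ i, ((q i + c i : ℕ) : ℕ∞) ≤ t.2.2.deg i) ∧
      (∃ pf1, gmap c t = Λ.comp (lmap t) (x.seg 0 c) pf1) ∧
      (∃ pf2, hmap c t = Λ.comp (mmap t) (x.seg 0 c) pf2) ∧
      fb Λ p c (gmap c t) = x.seg 0 c := by
    intro c t ht
    obtain ⟨ht1, htdom⟩ := ht
    obtain ⟨-, hUm, hVm, -, x, hx1, hx2⟩ := hKprop t ht1
    have hdl : Λ.d (lmap t) = p := hU hUm
    have hdm : Λ.d (mmap t) = q := hV hVm
    have hxc : x.dom c := by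
      intro i
      have h1 := htdom i
      rw [hx1.2.1 i, hdl] at h1
      exact he4 (p i) (c i) (x.deg i) h1
    have hqc : ∀ i, ((q i + c i : ℕ) : ℕ∞) ≤ t.2.2.deg i := by
      intro i
      rw [hx2.2.1 i, hdm, ENat.coe_add]
      exact add_le_add le_rfl (hxc i)
    have hle1 : Λ.d (lmap t) ≤ p + c := by
      rw [hdl]; intro i; simp only [Pi.add_apply]; omega
    obtain ⟨pf1, hseg1⟩ := hx1.2.2.2 (p + c) hle1 (fun i => htdom i)
    have hidx1 : (p + c) - Λ.d (lmap t) = c := by rw [hdl]; funext i; simp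
    have hg1 : ∃ pf1', gmap c t = Λ.comp (lmap t) (x.seg 0 c) pf1' := by
      refine ⟨by rw [← hidx1]; exact pf1, ?_⟩
      show t.1.seg 0 (p + c) = _
      rw [hseg1]; exact comp_congr Λ rfl (by rw [hidx1]) _ _
    have hle2 : Λ.d (mmap t) ≤ q + c := by
      rw [hdm]; intro i; simp only [Pi.add_apply]; omega
    obtain ⟨pf2, hseg2⟩ := hx2.2.2.2 (q + c) hle2 (fun i => hqc i)
    have hidx2 : (q + c) - Λ.d (mmap t) = c := by rw [hdm]; funext i; simp
    have hg2 : ∃ pf2', hmap c t = Λ.comp (mmap t) (x.seg 0 c) pf2' := by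
      refine ⟨by rw [← hidx2]; exact pf2, ?_⟩
      show t.2.2.seg 0 (q + c) = _
      rw [hseg2]; exact comp_congr Λ rfl (by rw [hidx2]) _ _
    obtain ⟨pf1', hg1'⟩ := hg1
    have hfbx : fb Λ p c (gmap c t) = x.seg 0 c :=
      (fpair_unique Λ pf1' hg1'.symm hdl (d_seg0 Λ hxc)).2
    exact ⟨x, hxc, hx1, hx2, hdl, hdm, hqc, ⟨pf1', hg1'⟩, hg2, hfbx⟩
  -- convergence of the µ-side extended segments
  have hHlim : ∀ c (hc : ∀ i, (c i : ℕ∞) ≤ degz i)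
      (pf : Λ.s mu = Λ.r (z.seg 0 c)),
      Tendsto (hmap c) (↑f) (𝓝 (Λ.comp mu (z.seg 0 c) pf)) := by
    intro c hc pf
    have hg : Good c := hGoodOfLe c hc
    have hfb : Tendsto (fun t => fb Λ p c (gmap c t)) (↑f) (𝓝 (z.seg 0 c)) := by
      rw [hzseg c hc]
      exact (tendsto_fab Λ (hνlim c hg) (hdν c hg) (eventually_of_mem hg.1 (hDomd c))).2
    set Jm : GTriple Λ → {pr : Mor × Mor // Λ.s pr.1 = Λ.r pr.2} := fun t =>
      if h : Λ.s (mmap t) = Λ.r (fb Λ p c (gmap c t)) then ⟨(mmap t, fb Λ p c (gmap c t)), h⟩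
      else ⟨(mu, z.seg 0 c), pf⟩ with hJm
    have hJval : ∀ t ∈ DomS c, (Jm t : Mor × Mor) = (mmap t, fb Λ p c (gmap c t)) ∧
        Λ.comp (Jm t).1.1 (Jm t).1.2 (Jm t).2 = hmap c t := by
      intro t ht
      obtain ⟨x, hxc, hx1, hx2, hdl, hdm, hqc, hgf, ⟨pf2, hh2⟩, hfbx⟩ := hKrel c t ht
      have hcnd : Λ.s (mmap t) = Λ.r (fb Λ p c (gmap c t)) := by rw [hfbx]; exact pf2
      constructor
      · rw [hJm]; beta_reduce; rw [dif_pos hcnd]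
      · rw [hJm]; beta_reduce; rw [dif_pos hcnd]
        show Λ.comp (mmap t) (fb Λ p c (gmap c t)) hcnd = hmap c t
        rw [hh2]; exact comp_congr Λ rfl hfbx _ _
    have hJlim : Tendsto Jm (↑f) (𝓝 ⟨(mu, z.seg 0 c), pf⟩) := by
      rw [tendsto_subtype_rng]
      refine Tendsto.congr' ?_ (hmu.prodMk_nhds hfb)
      exact eventually_of_mem hg.1 fun t ht => ((hJval t ht).1).symm
    have hcomp := (Λ.continuous_comp.continuousAt
      (x := ⟨(mu, z.seg 0 c), pf⟩)).tendsto.comp hJlim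
    refine Tendsto.congr' ?_ hcomp
    exact eventually_of_mem hg.1 fun t ht => (hJval t ht).2
  -- condition (ii): compact exclusion sets in the ultrafilter contain T
  have hCondW : ∀ (F : Set (Mor × Mor)) (m : Fin k → ℤ), IsCompact F →
      ZG Λ F m ∈ f → T ∈ ZG Λ F m := by
    intro F m hFc hZGf
    obtain ⟨t₀, ht₀⟩ := f.nonempty_of_mem (inter_mem hZGf hKf)
    have hmm : m = m₀ := by rw [← ht₀.1.1]; exact (hKprop t₀ ht₀.2).1
    subst hmm
    -- witness selection
    set wsel : GTriple Λ → Mor × Mor := fun t =>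
      if h : t ∈ ZG Λ F m₀ then h.2.choose else (lam, mu) with hwsel
    have hwspec : ∀ t ∈ ZG Λ F m₀, wsel t ∈ F ∧ Λ.s (wsel t).1 = Λ.s (wsel t).2 ∧
        (fun i => (Λ.d (wsel t).1 i : ℤ) - (Λ.d (wsel t).2 i : ℤ)) = m₀ ∧
        ∃ x, IsConcatOf (wsel t).1 x t.1 ∧ IsConcatOf (wsel t).2 x t.2.2 := by
      intro t ht
      have he : wsel t = ht.2.choose := by rw [hwsel]; beta_reduce; rw [dif_pos ht]
      rw [he]
      exact ⟨ht.2.choose_spec.1, ht.2.choose_spec.2.1, ht.2.choose_spec.2.2.1,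
        ht.2.choose_spec.2.2.2⟩
    obtain ⟨ab, habF, hablim⟩ := hFc.ultrafilter_le_nhds (f.map wsel)
      (le_principal_iff.mpr (mem_map.mpr (mem_of_superset hZGf (fun t ht => (hwspec t ht).1))))
    set a : Fin k → ℕ := Λ.d ab.1 with hadef
    set b : Fin k → ℕ := Λ.d ab.2 with hbdef
    have hdeg_open : IsOpen {pr : Mor × Mor | Λ.d pr.1 = a ∧ Λ.d pr.2 = b} :=
      ((isOpen_deg Λ a).preimage continuous_fst).inter ((isOpen_deg Λ b).preimage continuous_snd)
    have hdegf : wsel ⁻¹' {pr | Λ.d pr.1 = a ∧ Λ.d pr.2 = b} ∈ f :=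
      hablim (hdeg_open.mem_nhds ⟨rfl, rfl⟩)
    set E : Set (GTriple Λ) := ZG Λ F m₀ ∩ K ∩ wsel ⁻¹' {pr | Λ.d pr.1 = a ∧ Λ.d pr.2 = b}
      with hE
    have hEf : E ∈ f := inter_mem (inter_mem hZGf hKf) hdegf
    have habm : ∀ i, (a i : ℤ) - (b i : ℤ) = (p i : ℤ) - (q i : ℤ) := by
      obtain ⟨t₁, ht₁⟩ := f.nonempty_of_mem hEf
      intro i
      have h2 : (Λ.d (wsel t₁).1 i : ℤ) - (Λ.d (wsel t₁).2 i : ℤ) = m₀ i :=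
        congrFun (hwspec t₁ ht₁.1.1).2.2.1 i
      rw [ht₁.2.1, ht₁.2.2] at h2
      have h3 : m₀ i = (p i : ℤ) - (q i : ℤ) := by rw [hm₀def]
      exact h2.trans h3
    set c : Fin k → ℕ := fun i => max (a i) (p i) - p i with hcdef
    set e : Fin k → ℕ := fun i => max (a i) (p i) - a i with hedef
    have hci : ∀ i, c i = max (a i) (p i) - p i := fun i => rfl
    have hei : ∀ i, e i = max (a i) (p i) - a i := fun i => rfl
    have hidx3 : p + c = a + e := by
      funext i; simp only [Pi.add_apply, hci, hei]; omega
    have hidx1 : (p + c) - a = e := by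
      funext i; simp only [Pi.sub_apply, Pi.add_apply, hci, hei]; omega
    have hidx2 : (q + c) - b = e := by
      funext i; simp only [Pi.sub_apply, Pi.add_apply, hci, hei]
      have h1 := habm i; omega
    have hidx4 : q + c = b + e := by
      funext i; simp only [Pi.add_apply, hci, hei]
      have h1 := habm i; omega
    have hidx5 : a ≤ p + c := fun i => by simp only [Pi.add_apply, hci]; omega
    have hidx6 : b ≤ q + c := fun i => by
      simp only [Pi.add_apply, hci]
      have h1 := habm i; omega
    -- witness segments on E
    have hEfacts : ∀ t ∈ E, t ∈ DomS c ∧ (wsel t).1 = t.1.seg 0 a ∧ (wsel t).2 = t.2.2.seg 0 b := by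
      intro t ht
      obtain ⟨⟨htZ, htK⟩, htd⟩ := ht
      obtain ⟨x, hx1, hx2⟩ := (hwspec t htZ).2.2.2
      obtain ⟨-, hUm, -, -, xx, hxx1, -⟩ := hKprop t htK
      have hda : Λ.d (wsel t).1 = a := htd.1
      have hdb : Λ.d (wsel t).2 = b := htd.2
      have hdl : Λ.d (lmap t) = p := hU hUm
      have hdomt : ∀ i, ((p i + c i : ℕ) : ℕ∞) ≤ t.1.deg i := by
        intro i
        have h1 : (a i : ℕ∞) ≤ t.1.deg i := by
          rw [hx1.2.1 i, hda]
          exact le_self_add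
        have h2 : (p i : ℕ∞) ≤ t.1.deg i := by
          rw [hxx1.2.1 i, hdl]
          exact le_self_add
        have h3 : ((max (a i) (p i) : ℕ) : ℕ∞) ≤ t.1.deg i := he5 _ _ _ h1 h2
        have h4 : (p i + c i : ℕ) = max (a i) (p i) := by rw [hci]; omega
        rw [h4]; exact h3
      refine ⟨⟨htK, hdomt⟩, ?_, ?_⟩
      · rw [← hda]; exact (isConcat_seg0_eq Λ hx1).symm
      · rw [← hdb]; exact (isConcat_seg0_eq Λ hx2).symm
    -- Good c via compact alignment
    have hGoodc : Good c := by
      set Fa : Set Mor := (Prod.fst '' F) ∩ {g | Λ.d g = a} with hFa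
      have hFac : IsCompact Fa := (hFc.image continuous_fst).inter_right (isClosed_deg Λ a)
      have hmce : ∀ t ∈ E, gmap c t ∈ MCE Λ U Fa := by
        intro t ht
        obtain ⟨htdom, hw1, hw2⟩ := hEfacts t ht
        obtain ⟨-, hUm, -, -, -⟩ := hKprop t ht.1.2
        have hda : Λ.d (wsel t).1 = a := ht.2.1
        refine ⟨lmap t, hUm, (wsel t).1, ⟨⟨wsel t, (hwspec t ht.1.1).1, rfl⟩, hda⟩, ?_, ?_, ?_⟩
        · rw [hDomd c t htdom, hU hUm, hda]
          funext i; simp only [Pi.sup_apply, Pi.add_apply, hci]; omega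
        · obtain ⟨h1, h2⟩ := t.1.seg_comp 0 p (p + c) (pize p)
            (fun i => by simp only [Pi.add_apply]; omega) (fun i => htdom.2 i)
          exact ⟨t.1.seg p (p + c), h1, h2⟩
        · rw [hw1]
          obtain ⟨h1, h2⟩ := t.1.seg_comp 0 a (p + c) (pize a) hidx5 (fun i => htdom.2 i)
          exact ⟨t.1.seg a (p + c), h1, h2⟩
      have hMCEc : IsCompact (MCE Λ U Fa) :=
        hΛ p a U Fa hU (fun g hg => hg.2) hUc hFac
      obtain ⟨ν'', hν''mem, hν''⟩ := hMCEc.ultrafilter_le_nhds (f.map (gmap c))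
        (le_principal_iff.mpr (mem_map.mpr (mem_of_superset hEf hmce)))
      exact ⟨mem_of_superset hEf (fun t ht => (hEfacts t ht).1), ν'', hν''⟩
    have hcz : ∀ i, (c i : ℕ∞) ≤ degz i := hGoodLe c hGoodc
    have hzdomc : z.dom c := fun i => hcz i
    have hdnu : Λ.d (nu c) = a + e := by rw [hdν c hGoodc, hidx3]
    have pfl : Λ.s lam = Λ.r (z.seg 0 c) := hrngz.trans (rng_seg0 Λ hzdomc).symm
    have pfm : Λ.s mu = Λ.r (z.seg 0 c) := hrngz'.trans (rng_seg0 Λ hzdomc).symm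
    have hnuc : Λ.comp lam (z.seg 0 c) pfl = nu c := hcompν c hcz pfl
    set nu' : Mor := Λ.comp mu (z.seg 0 c) pfm with hnu'
    have hdnu' : Λ.d nu' = b + e := by
      rw [hnu', Λ.d_comp, hdmu, d_seg0 Λ hzdomc, hidx4]
    have hH := hHlim c hcz pfm
    -- degrees along the filter
    have hgmd : ∀ᶠ t in (↑f : Filter (GTriple Λ)), Λ.d (gmap c t) = a + e :=
      eventually_of_mem hGoodc.1 (fun t ht => by rw [hDomd c t ht, hidx3])
    have hhmd : ∀ᶠ t in (↑f : Filter (GTriple Λ)), Λ.d (hmap c t) = b + e := by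
      refine eventually_of_mem hGoodc.1 (fun t ht => ?_)
      obtain ⟨x, hxc, hx1, hx2, hdl, hdm, hqc, -, -, -⟩ := hKrel c t ht
      show Λ.d (t.2.2.seg 0 (q + c)) = b + e
      rw [d_seg0 Λ (x := t.2.2) (r := q + c) (fun i => hqc i), hidx4]
    -- identification of the limit witnesses
    have hα : ab.1 = fa Λ a e (nu c) := by
      refine tendsto_nhds_unique ?_ ((tendsto_fab Λ (hνlim c hGoodc) hdnu hgmd).1)
      refine Tendsto.congr' ?_ (continuous_fst.continuousAt.tendsto.comp hablim)
      refine eventually_of_mem hEf fun t ht => ?_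
      obtain ⟨htdom, hw1, hw2⟩ := hEfacts t ht
      show (wsel t).1 = fa Λ a e (gmap c t)
      rw [hw1]
      exact ((seg0_fa Λ hidx5 (fun i => htdom.2 i)).1).trans (fa_congr Λ rfl hidx1 rfl)
    have hβ : ab.2 = fa Λ b e nu' := by
      refine tendsto_nhds_unique ?_ ((tendsto_fab Λ hH hdnu' hhmd).1)
      refine Tendsto.congr' ?_ (continuous_snd.continuousAt.tendsto.comp hablim)
      refine eventually_of_mem hEf fun t ht => ?_
      obtain ⟨htdom, hw1, hw2⟩ := hEfacts t ht
      obtain ⟨x, hxc, hx1, hx2, hdl, hdm, hqc, -, -, -⟩ := hKrel c t htdom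
      show (wsel t).2 = fa Λ b e (hmap c t)
      rw [hw2]
      exact ((seg0_fa Λ hidx6 (fun i => hqc i)).1).trans (fa_congr Λ rfl hidx2 rfl)
    -- the common remainder δ
    have hδeq : fb Λ a e (nu c) = fb Λ b e nu' := by
      refine tendsto_nhds_unique
        (Tendsto.congr' ?_ ((tendsto_fab Λ (hνlim c hGoodc) hdnu hgmd).2))
        ((tendsto_fab Λ hH hdnu' hhmd).2)
      refine eventually_of_mem hEf fun t ht => ?_
      obtain ⟨htdom, hw1, hw2⟩ := hEfacts t ht
      obtain ⟨x, hxc, hx1, hx2, hdl, hdm, hqc, -, -, -⟩ := hKrel c t htdom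
      obtain ⟨y, hy1, hy2⟩ := (hwspec t ht.1.1).2.2.2
      have hda : Λ.d (wsel t).1 = a := ht.2.1
      have hdb : Λ.d (wsel t).2 = b := ht.2.2
      -- fb a e (gmap c t) = y.seg 0 e
      obtain ⟨pfy1, hsy1⟩ := hy1.2.2.2 (p + c) (by rw [hda]; exact hidx5) (fun i => htdom.2 i)
      obtain ⟨pfy2, hsy2⟩ := hy2.2.2.2 (q + c) (by rw [hdb]; exact hidx6) (fun i => hqc i)
      have hydome : y.dom e := by
        intro i
        have h1 : ((p i + c i : ℕ) : ℕ∞) ≤ (a i : ℕ∞) + y.deg i := by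
          have h0 : ((p i + c i : ℕ) : ℕ∞) ≤ t.1.deg i := htdom.2 i
          rw [hy1.2.1 i, hda] at h0
          exact h0
        have h4 : p i + c i = a i + e i := congrFun hidx3 i
        rw [h4] at h1
        exact he4 (a i) (e i) (y.deg i) h1
      have he1' : fb Λ a e (gmap c t) = y.seg 0 e := by
        have hcy : Λ.s (wsel t).1 = Λ.r (y.seg 0 e) := by
          rw [← hidx1, ← hda]; exact pfy1
        have hcompy : Λ.comp (wsel t).1 (y.seg 0 e) hcy = gmap c t := by
          show _ = t.1.seg 0 (p + c)
          rw [hsy1]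
          exact comp_congr Λ rfl (by rw [hda, hidx1]) _ _
        exact (fpair_unique Λ hcy hcompy hda (d_seg0 Λ hydome)).2
      have he2' : fb Λ b e (hmap c t) = y.seg 0 e := by
        have hcy : Λ.s (wsel t).2 = Λ.r (y.seg 0 e) := by
          rw [← hidx2, ← hdb]; exact pfy2
        have hcompy : Λ.comp (wsel t).2 (y.seg 0 e) hcy = hmap c t := by
          show _ = t.2.2.seg 0 (q + c)
          rw [hsy2]
          exact comp_congr Λ rfl (by rw [hdb, hidx2]) _ _
        exact (fpair_unique Λ hcy hcompy hdb (d_seg0 Λ hydome)).2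
      show fb Λ a e (gmap c t) = fb Λ b e (hmap c t)
      rw [he1', he2']
    -- assemble membership of T
    have hsab1 : Λ.s ab.1 = Λ.r (fb Λ a e (nu c)) := by rw [hα]; exact s_fa_r_fb Λ hdnu
    have hsab2 : Λ.s ab.2 = Λ.r (fb Λ a e (nu c)) := by
      rw [hβ, hδeq]; exact s_fa_r_fb Λ hdnu'
    have hsY : Λ.s (fb Λ a e (nu c)) = (shiftPath Λ z c hzdomc).rng := by
      rw [shiftPath_rng, s_fb Λ hdnu, ← hnuc, Λ.s_comp]
      exact (z.seg_comp 0 c c (pize c) le_rfl hzdomc).choose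
    have hfac1 : Λ.comp ab.1 (fb Λ a e (nu c)) hsab1 = Λ.comp lam (z.seg 0 c) pfl := by
      rw [hnuc]
      exact (comp_congr Λ hα rfl hsab1 (s_fa_r_fb Λ hdnu)).trans (comp_fa_fb Λ hdnu)
    have hfac2 : Λ.comp ab.2 (fb Λ a e (nu c)) hsab2 = Λ.comp mu (z.seg 0 c) pfm := by
      show _ = nu'
      refine (comp_congr Λ hβ hδeq hsab2 (s_fa_r_fb Λ hdnu')).trans
        (comp_fa_fb Λ hdnu')
    refine ⟨rfl, ab, habF, hsab1.trans hsab2.symm, ?_, 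
      concatPath Λ (fb Λ a e (nu c)) (shiftPath Λ z c hzdomc) hsY, ?_, ?_⟩
    · rw [hm₀def]
      funext i
      exact habm i
    · exact split_lemma Λ (concat_is Λ lam z hrngz) hzdomc hsab1 pfl hfac1 hsY
    · exact split_lemma Λ (concat_is Λ mu z hrngz') hzdomc hsab2 pfm hfac2 hsY
  -- condition (i): open basic sets containing T are in the ultrafilter
  have hCondZ : ∀ (U' V' : Set Mor) (m : Fin k → ℤ), IsOpen U' → IsOpen V' →
      T ∈ ZG Λ ((U' ×ˢ V') ∩ {lm | Λ.s lm.1 = Λ.s lm.2}) m →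
      ZG Λ ((U' ×ˢ V') ∩ {lm | Λ.s lm.1 = Λ.s lm.2}) m ∈ f := by
    intro U' V' m hU'o hV'o hTmem
    obtain ⟨hTm, lm', hlm'F, hss', hdeq', y, hy1, hy2⟩ := hTmem
    have hmm : m = m₀ := hTm.symm
    subst hmm
    obtain ⟨⟨hlamU2, hmuV2⟩, -⟩ := hlm'F
    set a : Fin k → ℕ := Λ.d lm'.1 with hadef
    set b : Fin k → ℕ := Λ.d lm'.2 with hbdef
    have habm : ∀ i, (a i : ℤ) - (b i : ℤ) = (p i : ℤ) - (q i : ℤ) := by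
      intro i
      have h2 : (Λ.d lm'.1 i : ℤ) - (Λ.d lm'.2 i : ℤ) = m₀ i := congrFun hdeq' i
      have h3 : m₀ i = (p i : ℤ) - (q i : ℤ) := by rw [hm₀def]
      exact h2.trans h3
    set c : Fin k → ℕ := fun i => max (a i) (p i) - p i with hcdef
    set e : Fin k → ℕ := fun i => max (a i) (p i) - a i with hedef
    have hci : ∀ i, c i = max (a i) (p i) - p i := fun i => rfl
    have hei : ∀ i, e i = max (a i) (p i) - a i := fun i => rfl
    have hidx3 : p + c = a + e := by
      funext i; simp only [Pi.add_apply, hci, hei]; omega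
    have hidx1 : (p + c) - a = e := by
      funext i; simp only [Pi.sub_apply, Pi.add_apply, hci, hei]; omega
    have hidx2 : (q + c) - b = e := by
      funext i; simp only [Pi.sub_apply, Pi.add_apply, hci, hei]
      have h1 := habm i; omega
    have hidx4 : q + c = b + e := by
      funext i; simp only [Pi.add_apply, hci, hei]
      have h1 := habm i; omega
    have hidx5 : a ≤ p + c := fun i => by simp only [Pi.add_apply, hci]; omega
    have hidx6 : b ≤ q + c := fun i => by
      simp only [Pi.add_apply, hci]
      have h1 := habm i; omega
    -- c is below the degree of z
    have hT1deg : ∀ i, T.1.deg i = (p i : ℕ∞) + degz i := by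
      intro i
      show (fun i => (Λ.d lam i : ℕ∞) + z.deg i) i = _
      simp only
      rw [hdlam]
      rfl
    have hcz : ∀ i, (c i : ℕ∞) ≤ degz i := by
      intro i
      have h0 : (a i : ℕ∞) ≤ T.1.deg i := by rw [hy1.2.1 i]; exact le_self_add
      rw [hT1deg i] at h0
      have h1 : ((max (a i) (p i) : ℕ) : ℕ∞) ≤ (p i : ℕ∞) + degz i :=
        he5 _ _ _ h0 le_self_add
      have h2 := he1 (max (a i) (p i)) (p i) (degz i) h1
      rw [hci]; exact h2
    have hGoodc : Good c := hGoodOfLe c hcz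
    have hzdomc : z.dom c := fun i => hcz i
    have hdnu : Λ.d (nu c) = a + e := by rw [hdν c hGoodc, hidx3]
    have pfl : Λ.s lam = Λ.r (z.seg 0 c) := hrngz.trans (rng_seg0 Λ hzdomc).symm
    have pfm : Λ.s mu = Λ.r (z.seg 0 c) := hrngz'.trans (rng_seg0 Λ hzdomc).symm
    have hnuc : Λ.comp lam (z.seg 0 c) pfl = nu c := hcompν c hcz pfl
    set nu' : Mor := Λ.comp mu (z.seg 0 c) pfm with hnu'
    have hdnu' : Λ.d nu' = b + e := by
      rw [hnu', Λ.d_comp, hdmu, d_seg0 Λ hzdomc, hidx4]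
    have hH := hHlim c hcz pfm
    have hgmd : ∀ᶠ t in (↑f : Filter (GTriple Λ)), Λ.d (gmap c t) = a + e :=
      eventually_of_mem hGoodc.1 (fun t ht => by rw [hDomd c t ht, hidx3])
    have hhmd : ∀ᶠ t in (↑f : Filter (GTriple Λ)), Λ.d (hmap c t) = b + e := by
      refine eventually_of_mem hGoodc.1 (fun t ht => ?_)
      obtain ⟨x, hxc, hx1, hx2, hdl, hdm, hqc, -, -, -⟩ := hKrel c t ht
      show Λ.d (t.2.2.seg 0 (q + c)) = b + e
      rw [d_seg0 Λ (x := t.2.2) (r := q + c) (fun i => hqc i), hidx4]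
    -- identification of λ', μ' and the common remainder
    have hT1domc : T.1.dom (p + c) := by
      intro i
      rw [hT1deg i]
      show ((p i + c i : ℕ) : ℕ∞) ≤ _
      rw [ENat.coe_add]
      exact add_le_add le_rfl (hcz i)
    have hTseg : T.1.seg 0 (p + c) = nu c := by
      obtain ⟨pf0, h0⟩ := (concat_is Λ lam z hrngz).2.2.2 (p + c)
        (by rw [hdlam]; exact fun i => by simp only [Pi.add_apply]; omega) hT1domc
      have hidx0 : (p + c) - Λ.d lam = c := by rw [hdlam]; funext i; simp
      rw [h0, ← hnuc]
      exact comp_congr Λ rfl (by rw [hidx0]) _ _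
    have hlamfa2 : lm'.1 = fa Λ a e (nu c) := by
      rw [← hTseg]
      refine ((isConcat_seg0_eq Λ hy1).symm).trans ?_
      exact ((seg0_fa Λ hidx5 hT1domc).1).trans (fa_congr Λ rfl hidx1 rfl)
    have hT2deg : ∀ i, T.2.2.deg i = (q i : ℕ∞) + degz i := by
      intro i
      show (fun i => (Λ.d mu i : ℕ∞) + z.deg i) i = _
      simp only
      rw [hdmu]
      rfl
    have hT2domc : T.2.2.dom (q + c) := by
      intro i
      rw [hT2deg i]
      show ((q i + c i : ℕ) : ℕ∞) ≤ _
      rw [ENat.coe_add]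
      exact add_le_add le_rfl (hcz i)
    have hTseg2 : T.2.2.seg 0 (q + c) = nu' := by
      obtain ⟨pf0, h0⟩ := (concat_is Λ mu z hrngz').2.2.2 (q + c)
        (by rw [hdmu]; exact fun i => by simp only [Pi.add_apply]; omega) hT2domc
      have hidx0 : (q + c) - Λ.d mu = c := by rw [hdmu]; funext i; simp
      rw [h0, hnu']
      exact comp_congr Λ rfl (by rw [hidx0]) _ _
    have hmufa2 : lm'.2 = fa Λ b e nu' := by
      rw [← hTseg2]
      refine ((isConcat_seg0_eq Λ hy2).symm).trans ?_
      exact ((seg0_fa Λ hidx6 hT2domc).1).trans (fa_congr Λ rfl hidx2 rfl)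
    have hydome : y.dom e := by
      intro i
      have h1 : ((p i + c i : ℕ) : ℕ∞) ≤ (a i : ℕ∞) + y.deg i := by
        have h0 : ((p i + c i : ℕ) : ℕ∞) ≤ T.1.deg i := hT1domc i
        rw [hy1.2.1 i] at h0
        exact h0
      have h4 : p i + c i = a i + e i := congrFun hidx3 i
      rw [h4] at h1
      exact he4 (a i) (e i) (y.deg i) h1
    have hδy : fb Λ a e (nu c) = y.seg 0 e := by
      obtain ⟨pfy1, hsy1⟩ := hy1.2.2.2 (p + c) hidx5 hT1domc
      have hcy : Λ.s lm'.1 = Λ.r (y.seg 0 e) := by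
        rw [← hidx1]; exact pfy1
      have hcompy : Λ.comp lm'.1 (y.seg 0 e) hcy = nu c := by
        rw [← hTseg, hsy1]
        exact (comp_congr Λ rfl (by rw [hidx1]) _ _).symm
      exact (fpair_unique Λ hcy hcompy rfl (d_seg0 Λ hydome)).2
    have hδ'y : fb Λ b e nu' = y.seg 0 e := by
      obtain ⟨pfy2, hsy2⟩ := hy2.2.2.2 (q + c) hidx6 hT2domc
      have hcy : Λ.s lm'.2 = Λ.r (y.seg 0 e) := by
        rw [← hidx2]; exact pfy2
      have hcompy : Λ.comp lm'.2 (y.seg 0 e) hcy = nu' := by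
        rw [← hTseg2, hsy2]
        exact (comp_congr Λ rfl (by rw [hidx2]) _ _).symm
      exact (fpair_unique Λ hcy hcompy rfl (d_seg0 Λ hydome)).2
    have hδeq : fb Λ a e (nu c) = fb Λ b e nu' := hδy.trans hδ'y.symm
    -- local homeomorphism of s at the common remainder
    obtain ⟨pe, hpes, hpef⟩ := Λ.isLocalHomeomorph_s (fb Λ a e (nu c))
    have hDlim : Tendsto (fun t => fb Λ a e (gmap c t)) (↑f) (𝓝 (fb Λ a e (nu c))) :=
      (tendsto_fab Λ (hνlim c hGoodc) hdnu hgmd).2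
    have hD'lim : Tendsto (fun t => fb Λ b e (hmap c t)) (↑f) (𝓝 (fb Λ b e nu')) :=
      (tendsto_fab Λ hH hdnu' hhmd).2
    -- the large set
    have hAf : (DomS c ∩ {t | fa Λ a e (gmap c t) ∈ U'} ∩ {t | fa Λ b e (hmap c t) ∈ V'}
        ∩ ({t | fb Λ a e (gmap c t) ∈ pe.source} ∩ {t | fb Λ b e (hmap c t) ∈ pe.source})) ∈ f := by
      refine inter_mem (inter_mem (inter_mem hGoodc.1 ?_) ?_) (inter_mem ?_ ?_)
      · exact (tendsto_fab Λ (hνlim c hGoodc) hdnu hgmd).1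
          (hU'o.mem_nhds (by rw [← hlamfa2]; exact hlamU2))
      · exact (tendsto_fab Λ hH hdnu' hhmd).1
          (hV'o.mem_nhds (by rw [← hmufa2]; exact hmuV2))
      · exact hDlim (pe.open_source.mem_nhds hpes)
      · exact hD'lim (pe.open_source.mem_nhds (by rw [← hδeq]; exact hpes))
    refine mem_of_superset hAf ?_
    rintro t ⟨⟨⟨htdom, htU'⟩, htV'⟩, htpe1, htpe2⟩
    obtain ⟨x, hxc, hx1, hx2, hdl, hdm, hqc, ⟨pf1, hg1⟩, ⟨pf2, hg2⟩, hfbx⟩ := hKrel c t htdom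
    have hdga : Λ.d (gmap c t) = a + e := by rw [hDomd c t htdom, hidx3]
    have hdha : Λ.d (hmap c t) = b + e := by
      show Λ.d (t.2.2.seg 0 (q + c)) = b + e
      rw [d_seg0 Λ (x := t.2.2) (r := q + c) (fun i => hqc i), hidx4]
    have e1 : Λ.s (gmap c t) = Λ.s (x.seg 0 c) := by rw [hg1, Λ.s_comp]
    have e2 : Λ.s (hmap c t) = Λ.s (x.seg 0 c) := by rw [hg2, Λ.s_comp]
    have hseq : Λ.s (fb Λ a e (gmap c t)) = Λ.s (fb Λ b e (hmap c t)) := by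
      rw [s_fb Λ hdga, s_fb Λ hdha, e1, e2]
    have hdeqt : fb Λ a e (gmap c t) = fb Λ b e (hmap c t) := by
      refine pe.injOn htpe1 htpe2 ?_
      rw [← hpef]
      exact hseq
    have hta : t.1.seg 0 a = fa Λ a e (gmap c t) :=
      ((seg0_fa Λ hidx5 (fun i => htdom.2 i)).1).trans (fa_congr Λ rfl hidx1 rfl)
    have htb : t.2.2.seg 0 b = fa Λ b e (hmap c t) :=
      ((seg0_fa Λ hidx6 (fun i => hqc i)).1).trans (fa_congr Λ rfl hidx2 rfl)
    have hdta : Λ.d (t.1.seg 0 a) = a := d_seg0 Λ (dom_mono Λ hidx5 (fun i => htdom.2 i))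
    have hdtb : Λ.d (t.2.2.seg 0 b) = b := d_seg0 Λ (dom_mono Λ hidx6 (fun i => hqc i))
    have hsteq : Λ.s (t.1.seg 0 a) = Λ.s (t.2.2.seg 0 b) := by
      rw [hta, htb, s_fa_r_fb Λ hdga, s_fa_r_fb Λ hdha, hdeqt]
    have hsYt : Λ.s (fb Λ a e (gmap c t)) = (shiftPath Λ x c hxc).rng := by
      rw [shiftPath_rng, s_fb Λ hdga, e1]
      exact (x.seg_comp 0 c c (pize c) le_rfl hxc).choose
    have hcmp1 : Λ.s (t.1.seg 0 a) = Λ.r (fb Λ a e (gmap c t)) := by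
      rw [hta]; exact s_fa_r_fb Λ hdga
    have hfac1t : Λ.comp (t.1.seg 0 a) (fb Λ a e (gmap c t)) hcmp1
        = Λ.comp (lmap t) (x.seg 0 c) pf1 := by
      rw [← hg1]
      exact (comp_congr Λ hta rfl hcmp1 (s_fa_r_fb Λ hdga)).trans (comp_fa_fb Λ hdga)
    have hcmp2 : Λ.s (t.2.2.seg 0 b) = Λ.r (fb Λ a e (gmap c t)) := by
      rw [htb, hdeqt]; exact s_fa_r_fb Λ hdha
    have hfac2t : Λ.comp (t.2.2.seg 0 b) (fb Λ a e (gmap c t)) hcmp2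
        = Λ.comp (mmap t) (x.seg 0 c) pf2 := by
      rw [← hg2]
      exact (comp_congr Λ htb hdeqt hcmp2 (s_fa_r_fb Λ hdha)).trans (comp_fa_fb Λ hdha)
    refine ⟨(hKprop t htdom.1).1, (t.1.seg 0 a, t.2.2.seg 0 b),
      ⟨⟨by rw [hta]; exact htU', by rw [htb]; exact htV'⟩, hsteq⟩, hsteq, ?_,
      concatPath Λ (fb Λ a e (gmap c t)) (shiftPath Λ x c hxc) hsYt, ?_, ?_⟩
    · rw [hm₀def]
      funext i
      show (Λ.d (t.1.seg 0 a) i : ℤ) - (Λ.d (t.2.2.seg 0 b) i : ℤ) = _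
      rw [hdta, hdtb]
      exact habm i
    · exact split_lemma Λ hx1 hxc hcmp1 pf1 hfac1t hsYt
    · exact split_lemma Λ hx2 hxc hcmp2 pf2 hfac2t hsYt
  -- assemble
  refine ⟨T, hTK, ?_⟩
  show (↑f : Filter (GTriple Λ)) ≤ @nhds _ (groupoidTopology Λ) T
  rw [groupoidTopology, TopologicalSpace.nhds_generateFrom]
  refine le_iInf fun S => le_iInf fun hS => ?_
  obtain ⟨hTS, m, U', V', F, hU'o, hV'o, hFc, rfl⟩ :
      (T ∈ S) ∧ ∃ (m : Fin k → ℤ) (U' V' : Set Mor) (F : Set (Mor × Mor)),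
        IsOpen U' ∧ IsOpen V' ∧ IsCompact F ∧
        S = ZG Λ ((U' ×ˢ V') ∩ {lm | Λ.s lm.1 = Λ.s lm.2}) m ∩ (ZG Λ F m)ᶜ := by
    obtain ⟨h1, h2⟩ := hS
    obtain ⟨m, U', V', F, h3, h4, h5, h6⟩ := h2
    exact ⟨h1, m, U', V', F, h3, h4, h5, h6⟩
  rw [le_principal_iff]
  refine (f.inter_mem ?_ ?_)
  · exact hCondZ U' V' m hU'o hV'o hTS.1
  · rw [Ultrafilter.mem_coe, Ultrafilter.compl_mem_iff_notMem]
    intro hmem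
    exact hTS.2 (hCondW F m hFc hmem)
end

section
/- For every vertex v of a topological k-graph Λ, the set v∂Λ of boundary paths with range v is nonempty. -/
open Set

namespace TKGAux

open TKG
open scoped Classical

variable {k : ℕ} {Obj Mor : Type} [TopologicalSpace Obj] [TopologicalSpace Mor]
variable (Λ : TopKGraph k Obj Mor)

theorem dsub {q df : Fin k → ℕ} (h : q ≤ df) : df = q + (df - q) := by
  funext i
  have hi : q i ≤ df i := h i
  simp only [Pi.add_apply, Pi.sub_apply]
  omega

/-- Proof-irrelevant congruence for composition. -/
theorem comp_congr {a b a' b' : Mor} {h : Λ.s a = Λ.r b} {h' : Λ.s a' = Λ.r b'}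
    (ha : a = a') (hb : b = b') : Λ.comp a b h = Λ.comp a' b' h' := by
  subst ha; subst hb; rfl

/-- The canonical factorization of `f` at degree `q ≤ d f`. -/
noncomputable def split (f : Mor) (q : Fin k → ℕ) : Mor × Mor :=
  if h : q ≤ Λ.d f then (Λ.factor f q (Λ.d f - q) (dsub h)).exists.choose
  else (f, f)

noncomputable def ini (f : Mor) (q : Fin k → ℕ) : Mor := (split Λ f q).1
noncomputable def fine (f : Mor) (q : Fin k → ℕ) : Mor := (split Λ f q).2

theorem split_spec {f : Mor} {q : Fin k → ℕ} (h : q ≤ Λ.d f) :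
    ∃ hc : Λ.s (ini Λ f q) = Λ.r (fine Λ f q),
      Λ.comp (ini Λ f q) (fine Λ f q) hc = f ∧ Λ.d (ini Λ f q) = q ∧
      Λ.d (fine Λ f q) = Λ.d f - q := by
  unfold ini fine split
  rw [dif_pos h]
  exact (Λ.factor f q (Λ.d f - q) (dsub h)).exists.choose_spec

theorem split_uniq {f g h' : Mor} (hc : Λ.s g = Λ.r h') (hf : Λ.comp g h' hc = f) :
    ini Λ f (Λ.d g) = g ∧ fine Λ f (Λ.d g) = h' := by
  have hd : Λ.d f = Λ.d g + Λ.d h' := by rw [← hf, Λ.d_comp]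
  have hq : Λ.d g ≤ Λ.d f := by
    rw [Pi.le_def]; intro i
    have hi : Λ.d f i = Λ.d g i + Λ.d h' i := by
      have := congrFun hd i; simpa [Pi.add_apply] using this
    omega
  obtain ⟨hc2, h1, h2, h3⟩ := split_spec Λ hq
  have hd2 : Λ.d h' = Λ.d f - Λ.d g := by
    funext i
    have hi : Λ.d f i = Λ.d g i + Λ.d h' i := by
      have := congrFun hd i; simpa [Pi.add_apply] using this
    simp only [Pi.sub_apply]
    omega
  have huniq := (Λ.factor f (Λ.d g) (Λ.d f - Λ.d g) (dsub hq)).unique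
    (y₁ := (ini Λ f (Λ.d g), fine Λ f (Λ.d g))) (y₂ := (g, h'))
    ⟨hc2, h1, h2, h3⟩ ⟨hc, hf, rfl, hd2⟩
  exact ⟨congrArg Prod.fst huniq, congrArg Prod.snd huniq⟩

theorem d_ini {f : Mor} {q : Fin k → ℕ} (h : q ≤ Λ.d f) : Λ.d (ini Λ f q) = q :=
  (split_spec Λ h).choose_spec.2.1

theorem d_fine {f : Mor} {q : Fin k → ℕ} (h : q ≤ Λ.d f) : Λ.d (fine Λ f q) = Λ.d f - q :=
  (split_spec Λ h).choose_spec.2.2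

theorem r_ini {f : Mor} {q : Fin k → ℕ} (h : q ≤ Λ.d f) : Λ.r (ini Λ f q) = Λ.r f := by
  obtain ⟨hc, he, -, -⟩ := split_spec Λ h
  conv_rhs => rw [← he]
  rw [Λ.r_comp]

theorem s_fine {f : Mor} {q : Fin k → ℕ} (h : q ≤ Λ.d f) : Λ.s (fine Λ f q) = Λ.s f := by
  obtain ⟨hc, he, -, -⟩ := split_spec Λ h
  conv_rhs => rw [← he]
  rw [Λ.s_comp]

theorem ini_zero (f : Mor) : ini Λ f 0 = Λ.ident (Λ.r f) ∧ fine Λ f 0 = f := by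
  have hc : Λ.s (Λ.ident (Λ.r f)) = Λ.r f := Λ.s_ident _
  have huniq := split_uniq Λ hc (Λ.ident_comp f hc)
  rwa [Λ.d_ident] at huniq

theorem ini_full (f : Mor) : ini Λ f (Λ.d f) = f ∧ fine Λ f (Λ.d f) = Λ.ident (Λ.s f) := by
  have hc : Λ.s f = Λ.r (Λ.ident (Λ.s f)) := (Λ.r_ident _).symm
  exact split_uniq Λ (g := f) hc (Λ.comp_ident f hc)

/-- Degree-zero morphisms are identities. -/
theorem d_zero_ident {f : Mor} (h : Λ.d f = 0) :
    f = Λ.ident (Λ.r f) ∧ Λ.r f = Λ.s f := by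
  have hc1 : Λ.s (Λ.ident (Λ.r f)) = Λ.r f := Λ.s_ident _
  have hc2 : Λ.s f = Λ.r (Λ.ident (Λ.s f)) := (Λ.r_ident _).symm
  have huniq := (Λ.factor f 0 0 (by rw [h]; funext i; simp)).unique
    (y₁ := (Λ.ident (Λ.r f), f)) (y₂ := (f, Λ.ident (Λ.s f)))
    ⟨hc1, Λ.ident_comp f hc1, Λ.d_ident _, h⟩
    ⟨hc2, Λ.comp_ident f hc2, h, Λ.d_ident _⟩
  have h1 : Λ.ident (Λ.r f) = f := congrArg Prod.fst huniq
  refine ⟨h1.symm, ?_⟩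
  have h2 : f = Λ.ident (Λ.s f) := congrArg Prod.snd huniq
  rw [h2, Λ.r_ident, Λ.s_ident]

end TKGAux
namespace TKGAux

variable {k : ℕ} {Obj Mor : Type} [TopologicalSpace Obj] [TopologicalSpace Mor]
variable (Λ : TKG.TopKGraph k Obj Mor)

/-- Splitting twice. -/
theorem split_split {f : Mor} {b c : Fin k → ℕ} (hb : b ≤ c) (hc : c ≤ Λ.d f) :
    ∃ hcc : Λ.s (ini Λ f b) = Λ.r (ini Λ (fine Λ f b) (c - b)),
      Λ.comp (ini Λ f b) (ini Λ (fine Λ f b) (c - b)) hcc = ini Λ f c ∧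
      fine Λ (fine Λ f b) (c - b) = fine Λ f c := by
  have hbf : b ≤ Λ.d f := le_trans hb hc
  obtain ⟨h1, e1, d1, d1'⟩ := split_spec Λ hbf
  have hcb : c - b ≤ Λ.d (fine Λ f b) := by
    rw [d1', Pi.le_def]; intro i
    have hi : c i ≤ Λ.d f i := hc i
    have hi2 : b i ≤ c i := hb i
    simp only [Pi.sub_apply]
    omega
  obtain ⟨h2, e2, d2, d2'⟩ := split_spec Λ hcb
  have hcc : Λ.s (ini Λ f b) = Λ.r (ini Λ (fine Λ f b) (c - b)) := by
    rw [h1]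
    conv_lhs => rw [← e2]
    rw [Λ.r_comp]
  have hW : Λ.s (Λ.comp (ini Λ f b) (ini Λ (fine Λ f b) (c - b)) hcc)
      = Λ.r (fine Λ (fine Λ f b) (c - b)) := by rw [Λ.s_comp]; exact h2
  have hA : Λ.s (ini Λ f b)
      = Λ.r (Λ.comp (ini Λ (fine Λ f b) (c - b)) (fine Λ (fine Λ f b) (c - b)) h2) := by
    rw [Λ.r_comp]; exact hcc
  have hf : Λ.comp (Λ.comp (ini Λ f b) (ini Λ (fine Λ f b) (c - b)) hcc)
      (fine Λ (fine Λ f b) (c - b)) hW = f := by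
    rw [Λ.comp_assoc _ _ _ hcc h2 hW hA]
    exact (comp_congr Λ rfl e2).trans e1
  have huniq := split_uniq Λ hW hf
  have hdAC : Λ.d (Λ.comp (ini Λ f b) (ini Λ (fine Λ f b) (c - b)) hcc) = c := by
    rw [Λ.d_comp, d1, d2]
    funext i
    have hi2 : b i ≤ c i := hb i
    simp only [Pi.add_apply, Pi.sub_apply]
    omega
  rw [hdAC] at huniq
  exact ⟨hcc, huniq.1.symm, huniq.2.symm⟩

noncomputable def sgm (f : Mor) (p q : Fin k → ℕ) : Mor := ini Λ (fine Λ f p) (q - p)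

theorem sub_le_sub' {p q u : Fin k → ℕ} (hpq : p ≤ q) (hq : q ≤ u) : q - p ≤ u - p := by
  rw [Pi.le_def]; intro i
  have h1 : p i ≤ q i := hpq i
  have h2 : q i ≤ u i := hq i
  simp only [Pi.sub_apply]
  omega

theorem d_sgm {f : Mor} {p q : Fin k → ℕ} (hpq : p ≤ q) (hq : q ≤ Λ.d f) :
    Λ.d (sgm Λ f p q) = q - p := by
  have hp : p ≤ Λ.d f := le_trans hpq hq
  have h : q - p ≤ Λ.d (fine Λ f p) := by rw [d_fine Λ hp]; exact sub_le_sub' hpq hq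
  exact d_ini Λ h

theorem r_sgm {f : Mor} {p q : Fin k → ℕ} (hpq : p ≤ q) (hq : q ≤ Λ.d f) :
    Λ.r (sgm Λ f p q) = Λ.r (fine Λ f p) := by
  have hp : p ≤ Λ.d f := le_trans hpq hq
  have h : q - p ≤ Λ.d (fine Λ f p) := by rw [d_fine Λ hp]; exact sub_le_sub' hpq hq
  exact r_ini Λ h

theorem sgm_self {f : Mor} {p : Fin k → ℕ} (hp : p ≤ Λ.d f) :
    sgm Λ f p p = Λ.ident (Λ.r (sgm Λ f p p)) := by
  have hd : Λ.d (sgm Λ f p p) = 0 := by rw [d_sgm Λ le_rfl hp, tsub_self]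
  exact (d_zero_ident Λ hd).1

theorem sgm_zero {f : Mor} {q : Fin k → ℕ} : sgm Λ f 0 q = ini Λ f q := by
  unfold sgm
  rw [(ini_zero Λ f).2, tsub_zero]

theorem sgm_full (f : Mor) : sgm Λ f 0 (Λ.d f) = f := by
  rw [sgm_zero]; exact (ini_full Λ f).1

theorem sgm_comp {f : Mor} {p q u : Fin k → ℕ} (hpq : p ≤ q) (hqu : q ≤ u)
    (hu : u ≤ Λ.d f) :
    ∃ h : Λ.s (sgm Λ f p q) = Λ.r (sgm Λ f q u),
      Λ.comp (sgm Λ f p q) (sgm Λ f q u) h = sgm Λ f p u := by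
  have hq : q ≤ Λ.d f := le_trans hqu hu
  have hp : p ≤ Λ.d f := le_trans hpq hq
  have hpu : p ≤ u := le_trans hpq hqu
  have hdB : Λ.d (fine Λ f p) = Λ.d f - p := d_fine Λ hp
  have hb : q - p ≤ u - p := sub_le_sub' hpq hqu
  have hcB : u - p ≤ Λ.d (fine Λ f p) := by rw [hdB]; exact sub_le_sub' hpu hu
  obtain ⟨hcc, he, -⟩ := split_split Λ hb hcB
  have hfq : fine Λ (fine Λ f p) (q - p) = fine Λ f q := (split_split Λ hpq hq).2.2
  have harith : (u - p) - (q - p) = u - q := by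
    funext i
    have h1 : p i ≤ q i := hpq i
    have h2 : q i ≤ u i := hqu i
    simp only [Pi.sub_apply]
    omega
  have hx : ini Λ (fine Λ (fine Λ f p) (q - p)) ((u - p) - (q - p)) = sgm Λ f q u := by
    show _ = ini Λ (fine Λ f q) (u - q)
    rw [hfq, harith]
  have hcc2 : Λ.s (sgm Λ f p q) = Λ.r (sgm Λ f q u) := by
    show Λ.s (ini Λ (fine Λ f p) (q - p)) = _
    rw [← hx]; exact hcc
  refine ⟨hcc2, ?_⟩
  show Λ.comp (ini Λ (fine Λ f p) (q - p)) (sgm Λ f q u) hcc2 = ini Λ (fine Λ f p) (u - p)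
  exact (comp_congr Λ rfl hx.symm).trans he

theorem fine_comp {f a : Mor} {m : Fin k → ℕ} (hm : m ≤ Λ.d f) (ha : Λ.s f = Λ.r a) :
    ∃ h' : Λ.s (fine Λ f m) = Λ.r a,
      fine Λ (Λ.comp f a ha) m = Λ.comp (fine Λ f m) a h' ∧
      ini Λ (Λ.comp f a ha) m = ini Λ f m := by
  obtain ⟨h1, e1, d1, d1'⟩ := split_spec Λ hm
  have h' : Λ.s (fine Λ f m) = Λ.r a := by rw [s_fine Λ hm]; exact ha
  have hW : Λ.s (ini Λ f m) = Λ.r (Λ.comp (fine Λ f m) a h') := by rw [Λ.r_comp]; exact h1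
  have hcomp : Λ.comp (ini Λ f m) (Λ.comp (fine Λ f m) a h') hW = Λ.comp f a ha := by
    rw [← Λ.comp_assoc (ini Λ f m) (fine Λ f m) a h1 h' (by rw [Λ.s_comp]; exact h') hW]
    exact comp_congr Λ e1 rfl
  have huniq := split_uniq Λ hW hcomp
  rw [d1] at huniq
  exact ⟨h', huniq.2, huniq.1⟩

theorem sgm_extend {f a : Mor} {p q : Fin k → ℕ} (hpq : p ≤ q) (hq : q ≤ Λ.d f)
    (ha : Λ.s f = Λ.r a) :
    sgm Λ (Λ.comp f a ha) p q = sgm Λ f p q := by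
  have hp : p ≤ Λ.d f := le_trans hpq hq
  obtain ⟨h', hfe, -⟩ := fine_comp Λ hp ha
  show ini Λ (fine Λ (Λ.comp f a ha) p) (q - p) = ini Λ (fine Λ f p) (q - p)
  rw [hfe]
  have hdB : Λ.d (fine Λ f p) = Λ.d f - p := d_fine Λ hp
  have hqp : q - p ≤ Λ.d (fine Λ f p) := by rw [hdB]; exact sub_le_sub' hpq hq
  obtain ⟨h2, e2, d2, d2'⟩ := split_spec Λ hqp
  have hDa : Λ.s (fine Λ (fine Λ f p) (q - p)) = Λ.r a := by rw [s_fine Λ hqp]; exact h'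
  have hW : Λ.s (ini Λ (fine Λ f p) (q - p))
      = Λ.r (Λ.comp (fine Λ (fine Λ f p) (q - p)) a hDa) := by rw [Λ.r_comp]; exact h2
  have hcomp : Λ.comp (ini Λ (fine Λ f p) (q - p))
      (Λ.comp (fine Λ (fine Λ f p) (q - p)) a hDa) hW = Λ.comp (fine Λ f p) a h' := by
    rw [← Λ.comp_assoc _ _ a h2 hDa (by rw [Λ.s_comp]; exact hDa) hW]
    exact comp_congr Λ e2 rfl
  have huniq := split_uniq Λ hW hcomp
  rw [d2] at huniq
  exact huniq.1

end TKGAux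
namespace TKGAux

open TKG
open scoped Classical

variable {k : ℕ} {Obj Mor : Type} [TopologicalSpace Obj] [TopologicalSpace Mor]
variable (Λ : TopKGraph k Obj Mor)

/-- If the tail of `f` at `m` has a common extension with `l` via `(a,b)`, then
extending `f` by `a` produces a morphism whose segment `[m, m + d l]` is exactly `l`. -/
theorem ext_match {f a l b : Mor} {m : Fin k → ℕ} (hm : m ≤ Λ.d f)
    (h1 : Λ.s (fine Λ f m) = Λ.r a) (h2 : Λ.s l = Λ.r b)
    (he : Λ.comp (fine Λ f m) a h1 = Λ.comp l b h2) (ha : Λ.s f = Λ.r a) :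
    m + Λ.d l ≤ Λ.d (Λ.comp f a ha) ∧ sgm Λ (Λ.comp f a ha) m (m + Λ.d l) = l := by
  have hdt : Λ.d (fine Λ f m) = Λ.d f - m := d_fine Λ hm
  have hdl : Λ.d l ≤ Λ.d (fine Λ f m) + Λ.d a := by
    have : Λ.d (Λ.comp (fine Λ f m) a h1) = Λ.d (Λ.comp l b h2) := by rw [he]
    rw [Λ.d_comp, Λ.d_comp] at this
    rw [Pi.le_def]; intro i
    have hi : Λ.d (fine Λ f m) i + Λ.d a i = Λ.d l i + Λ.d b i := by
      have h := congrFun this i; simpa [Pi.add_apply] using h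
    simp only [Pi.add_apply]
    omega
  constructor
  · rw [Λ.d_comp, Pi.le_def]; intro i
    have hi1 : Λ.d l i ≤ Λ.d (fine Λ f m) i + Λ.d a i := hdl i
    have hi2 : Λ.d (fine Λ f m) i = Λ.d f i - m i := by
      have h := congrFun hdt i; simpa [Pi.sub_apply] using h
    have hi3 : m i ≤ Λ.d f i := hm i
    simp only [Pi.add_apply]
    omega
  · obtain ⟨h', hfe, -⟩ := fine_comp Λ hm ha
    show ini Λ (fine Λ (Λ.comp f a ha) m) (m + Λ.d l - m) = l
    have harith : m + Λ.d l - m = Λ.d l := by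
      funext i; simp only [Pi.add_apply, Pi.sub_apply]; omega
    rw [hfe, harith]
    have hstep : Λ.comp (fine Λ f m) a h' = Λ.comp l b h2 :=
      (comp_congr Λ rfl rfl).trans he
    exact (split_uniq Λ h2 hstep.symm).1

/-- If `t ⬝ c` has a minimal common extension with `l`, then so does `t`. -/
theorem minext_of_comp {t c l : Mor} (hc : Λ.s t = Λ.r c)
    (H : (MinExt Λ (Λ.comp t c hc) l).Nonempty) : (MinExt Λ t l).Nonempty := by
  obtain ⟨⟨a, b⟩, h1, h2, he, -⟩ := H
  set g := Λ.comp (Λ.comp t c hc) a h1 with hg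
  have ge : g = Λ.comp l b h2 := he
  have h1' : Λ.s c = Λ.r a := by rw [← Λ.s_comp t c hc]; exact h1
  have hx : Λ.s t = Λ.r (Λ.comp c a h1') := by rw [Λ.r_comp]; exact hc
  have hassoc : g = Λ.comp t (Λ.comp c a h1') hx := Λ.comp_assoc t c a hc h1' h1 hx
  have et := split_uniq Λ hx hassoc.symm
  have el := split_uniq Λ h2 ge.symm
  have hdg : Λ.d g = Λ.d t + Λ.d c + Λ.d a := by rw [hg, Λ.d_comp, Λ.d_comp]
  have hdg2 : Λ.d g = Λ.d l + Λ.d b := by rw [ge, Λ.d_comp]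
  have hqg : Λ.d t ⊔ Λ.d l ≤ Λ.d g := by
    rw [Pi.le_def]; intro i
    have i1 : Λ.d g i = Λ.d t i + Λ.d c i + Λ.d a i := by
      have h := congrFun hdg i; simpa [Pi.add_apply] using h
    have i2 : Λ.d g i = Λ.d l i + Λ.d b i := by
      have h := congrFun hdg2 i; simpa [Pi.add_apply] using h
    have i3 : (Λ.d t ⊔ Λ.d l) i = max (Λ.d t i) (Λ.d l i) := rfl
    rw [i3]
    omega
  have htq : Λ.d t ≤ Λ.d t ⊔ Λ.d l := le_sup_left
  have hlq : Λ.d l ≤ Λ.d t ⊔ Λ.d l := le_sup_right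
  obtain ⟨hcc1, hcomp1, -⟩ := split_split Λ htq hqg
  obtain ⟨hcc2, hcomp2, -⟩ := split_split Λ hlq hqg
  have hcc1' : Λ.s t = Λ.r (ini Λ (fine Λ g (Λ.d t)) (Λ.d t ⊔ Λ.d l - Λ.d t)) := by
    conv_lhs => rw [← et.1]
    exact hcc1
  have hcc2' : Λ.s l = Λ.r (ini Λ (fine Λ g (Λ.d l)) (Λ.d t ⊔ Λ.d l - Λ.d l)) := by
    conv_lhs => rw [← el.1]
    exact hcc2
  have hcomp1' : Λ.comp t (ini Λ (fine Λ g (Λ.d t)) (Λ.d t ⊔ Λ.d l - Λ.d t)) hcc1'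
      = ini Λ g (Λ.d t ⊔ Λ.d l) := (comp_congr Λ et.1.symm rfl).trans hcomp1
  have hcomp2' : Λ.comp l (ini Λ (fine Λ g (Λ.d l)) (Λ.d t ⊔ Λ.d l - Λ.d l)) hcc2'
      = ini Λ g (Λ.d t ⊔ Λ.d l) := (comp_congr Λ el.1.symm rfl).trans hcomp2
  refine ⟨(ini Λ (fine Λ g (Λ.d t)) (Λ.d t ⊔ Λ.d l - Λ.d t),
           ini Λ (fine Λ g (Λ.d l)) (Λ.d t ⊔ Λ.d l - Λ.d l)), hcc1', hcc2', ?_, ?_⟩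
  · exact hcomp1'.trans hcomp2'.symm
  · have hsub : Λ.d t ⊔ Λ.d l - Λ.d t ≤ Λ.d (fine Λ g (Λ.d t)) := by
      rw [d_fine Λ (le_trans htq hqg), Pi.le_def]; intro i
      have i1 : (Λ.d t ⊔ Λ.d l) i ≤ Λ.d g i := hqg i
      have i3 : (Λ.d t ⊔ Λ.d l) i = max (Λ.d t i) (Λ.d l i) := rfl
      simp only [Pi.sub_apply, i3] at *
      omega
    rw [d_ini Λ hsub]
    funext i
    have i3 : (Λ.d t ⊔ Λ.d l) i = max (Λ.d t i) (Λ.d l i) := rfl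
    simp only [Pi.add_apply, Pi.sub_apply, i3]
    omega

end TKGAux
namespace TKGAux

open TKG
open scoped Classical

variable {k : ℕ} {Obj Mor : Type} [TopologicalSpace Obj] [TopologicalSpace Mor]
variable (Λ : TopKGraph k Obj Mor)

def goodExt (f : Mor) (m : Fin k → ℕ) (U : Set Mor) : Prop :=
  m ≤ Λ.d f ∧ ∃ l ∈ U, (MinExt Λ (fine Λ f m) l).Nonempty

theorem goodExt_elim {f : Mor} {m : Fin k → ℕ} {U : Set Mor} (h : goodExt Λ f m U) :
    ∃ a, ∃ ha : Λ.s f = Λ.r a, ∃ l ∈ U,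
      m + Λ.d l ≤ Λ.d (Λ.comp f a ha) ∧ sgm Λ (Λ.comp f a ha) m (m + Λ.d l) = l := by
  obtain ⟨hm, l, hl, ⟨⟨a, b⟩, h1, h2, he, -⟩⟩ := h
  have ha : Λ.s f = Λ.r a := by rw [← s_fine Λ hm]; exact h1
  obtain ⟨hb, hseg⟩ := ext_match Λ hm h1 h2 he ha
  exact ⟨a, ha, l, hl, hb, hseg⟩

noncomputable def stepF (U : Set Mor) (m : Fin k → ℕ) (f : Mor) : Mor :=
  if h : goodExt Λ f m U then
    Λ.comp f (goodExt_elim Λ h).choose (goodExt_elim Λ h).choose_spec.choose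
  else f

theorem stepF_ext (U : Set Mor) (m : Fin k → ℕ) (f : Mor) :
    ∃ a, ∃ ha : Λ.s f = Λ.r a, stepF Λ U m f = Λ.comp f a ha := by
  unfold stepF
  split
  case isTrue h =>
    exact ⟨(goodExt_elim Λ h).choose, (goodExt_elim Λ h).choose_spec.choose, rfl⟩
  case isFalse h =>
    exact ⟨Λ.ident (Λ.s f), (Λ.r_ident _).symm, (Λ.comp_ident f ((Λ.r_ident _).symm)).symm⟩

theorem stepF_match {U : Set Mor} {m : Fin k → ℕ} {f : Mor} (h : goodExt Λ f m U) :
    ∃ l ∈ U, m + Λ.d l ≤ Λ.d (stepF Λ U m f) ∧ sgm Λ (stepF Λ U m f) m (m + Λ.d l) = l := by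
  unfold stepF
  rw [dif_pos h]
  exact (goodExt_elim Λ h).choose_spec.choose_spec

variable (Bs : ℕ → Set Mor) (sched : ℕ → (Fin k → ℕ) × ℕ) (v : Obj)

noncomputable def seq : ℕ → Mor
  | 0 => Λ.ident v
  | n + 1 => stepF Λ (Bs (sched n).2) (sched n).1 (seq n)

theorem r_seq (n : ℕ) : Λ.r (seq Λ Bs sched v n) = v := by
  induction n with
  | zero => show Λ.r (Λ.ident v) = v; exact Λ.r_ident v
  | succ n ih =>
    obtain ⟨a, ha, he⟩ := stepF_ext Λ (Bs (sched n).2) (sched n).1 (seq Λ Bs sched v n)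
    show Λ.r (stepF Λ (Bs (sched n).2) (sched n).1 (seq Λ Bs sched v n)) = v
    rw [he, Λ.r_comp]
    exact ih

theorem d_seq_mono : Monotone (fun n => Λ.d (seq Λ Bs sched v n)) := by
  apply monotone_nat_of_le_succ
  intro n
  obtain ⟨a, ha, he⟩ := stepF_ext Λ (Bs (sched n).2) (sched n).1 (seq Λ Bs sched v n)
  show Λ.d (seq Λ Bs sched v n) ≤ Λ.d (stepF Λ (Bs (sched n).2) (sched n).1 (seq Λ Bs sched v n))
  rw [he, Λ.d_comp]
  exact le_self_add

theorem seq_extends {n n' : ℕ} (h : n ≤ n') :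
    ∃ c, ∃ hc : Λ.s (seq Λ Bs sched v n) = Λ.r c,
      seq Λ Bs sched v n' = Λ.comp (seq Λ Bs sched v n) c hc := by
  induction n', h using Nat.le_induction with
  | base => exact ⟨Λ.ident (Λ.s _), (Λ.r_ident _).symm, (Λ.comp_ident _ _).symm⟩
  | succ n' hnn ih =>
    obtain ⟨c, hc, e⟩ := ih
    obtain ⟨a, ha, he⟩ := stepF_ext Λ (Bs (sched n').2) (sched n').1 (seq Λ Bs sched v n')
    have hca : Λ.s c = Λ.r a := by
      rw [← Λ.s_comp (seq Λ Bs sched v n) c hc, ← e]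
      exact ha
    have hcompa : Λ.s (Λ.comp (seq Λ Bs sched v n) c hc) = Λ.r a := by
      rw [Λ.s_comp]; exact hca
    have hccomp : Λ.s (seq Λ Bs sched v n) = Λ.r (Λ.comp c a hca) := by
      rw [Λ.r_comp]; exact hc
    refine ⟨Λ.comp c a hca, hccomp, ?_⟩
    show stepF Λ (Bs (sched n').2) (sched n').1 (seq Λ Bs sched v n')
        = Λ.comp (seq Λ Bs sched v n) (Λ.comp c a hca) hccomp
    rw [he]
    calc Λ.comp (seq Λ Bs sched v n') a ha
        = Λ.comp (Λ.comp (seq Λ Bs sched v n) c hc) a hcompa := comp_congr Λ e rfl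
      _ = Λ.comp (seq Λ Bs sched v n) (Λ.comp c a hca) hccomp :=
          Λ.comp_assoc _ _ _ hc hca hcompa hccomp

theorem seq_sgm_stable {n n' : ℕ} {p q : Fin k → ℕ} (h : n ≤ n') (hpq : p ≤ q)
    (hq : q ≤ Λ.d (seq Λ Bs sched v n)) :
    sgm Λ (seq Λ Bs sched v n') p q = sgm Λ (seq Λ Bs sched v n) p q := by
  obtain ⟨c, hc, e⟩ := seq_extends Λ Bs sched v h
  rw [e]
  exact sgm_extend Λ hpq hq hc

end TKGAux
namespace TKGAux

open TKG
open scoped Classical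

variable {k : ℕ} {Obj Mor : Type} [TopologicalSpace Obj] [TopologicalSpace Mor]
variable (Λ : TopKGraph k Obj Mor)
variable (Bs : ℕ → Set Mor) (sched : ℕ → (Fin k → ℕ) × ℕ) (v : Obj)

noncomputable def limDeg : Fin k → ℕ∞ := fun i => ⨆ n, (Λ.d (seq Λ Bs sched v n) i : ℕ∞)

theorem le_limDeg {q : Fin k → ℕ} {n : ℕ} (h : q ≤ Λ.d (seq Λ Bs sched v n)) :
    ∀ i, (q i : ℕ∞) ≤ limDeg Λ Bs sched v i := by
  intro i
  have hi : q i ≤ Λ.d (seq Λ Bs sched v n) i := h i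
  calc (q i : ℕ∞) ≤ (Λ.d (seq Λ Bs sched v n) i : ℕ∞) := by exact_mod_cast hi
    _ ≤ _ := le_iSup (fun n => ((Λ.d (seq Λ Bs sched v n) i : ℕ∞))) n

theorem exists_seq_ge {q : Fin k → ℕ} (h : ∀ i, (q i : ℕ∞) ≤ limDeg Λ Bs sched v i) :
    ∃ n, q ≤ Λ.d (seq Λ Bs sched v n) := by
  have key : ∀ i : Fin k, ∃ n, q i ≤ Λ.d (seq Λ Bs sched v n) i := by
    intro i
    by_contra hcon
    push_neg at hcon
    have hb : ∀ n, (Λ.d (seq Λ Bs sched v n) i : ℕ∞) ≤ ((q i - 1 : ℕ) : ℕ∞) := by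
      intro n
      have h2 := hcon n
      exact_mod_cast (by omega : Λ.d (seq Λ Bs sched v n) i ≤ q i - 1)
    have hs : limDeg Λ Bs sched v i ≤ ((q i - 1 : ℕ) : ℕ∞) := iSup_le hb
    have h3 := le_trans (h i) hs
    have h4 : q i ≤ q i - 1 := by exact_mod_cast h3
    have h0 := hcon 0
    omega
  choose ns hns using key
  refine ⟨Finset.univ.sup ns, ?_⟩
  rw [Pi.le_def]; intro i
  have hmono := d_seq_mono Λ Bs sched v (Finset.le_sup (f := ns) (Finset.mem_univ i))
  have hx : Λ.d (seq Λ Bs sched v (ns i)) i ≤ Λ.d (seq Λ Bs sched v (Finset.univ.sup ns)) i :=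
    hmono i
  exact le_trans (hns i) hx

noncomputable def limSeg (p q : Fin k → ℕ) : Mor :=
  if h : p ≤ q ∧ ∃ n, q ≤ Λ.d (seq Λ Bs sched v n) then
    sgm Λ (seq Λ Bs sched v h.2.choose) p q
  else Λ.ident v

theorem limSeg_eq {p q : Fin k → ℕ} (hpq : p ≤ q) {n : ℕ}
    (hq : q ≤ Λ.d (seq Λ Bs sched v n)) :
    limSeg Λ Bs sched v p q = sgm Λ (seq Λ Bs sched v n) p q := by
  have h : p ≤ q ∧ ∃ n, q ≤ Λ.d (seq Λ Bs sched v n) := ⟨hpq, n, hq⟩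
  unfold limSeg
  rw [dif_pos h]
  have hq0 : q ≤ Λ.d (seq Λ Bs sched v h.2.choose) := h.2.choose_spec
  rcases le_total h.2.choose n with hle | hle
  · exact (seq_sgm_stable Λ Bs sched v hle hpq hq0).symm
  · exact seq_sgm_stable Λ Bs sched v hle hpq hq

theorem limSeg_zero : limSeg Λ Bs sched v 0 0 = Λ.ident v := by
  have h0 : (0 : Fin k → ℕ) ≤ Λ.d (seq Λ Bs sched v 0) := fun i => Nat.zero_le _
  rw [limSeg_eq Λ Bs sched v le_rfl h0, sgm_self Λ h0, r_sgm Λ le_rfl h0, (ini_zero Λ _).2]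
  show Λ.ident (Λ.r (Λ.ident v)) = Λ.ident v
  rw [Λ.r_ident]

noncomputable def limPath : KPath Λ where
  deg := limDeg Λ Bs sched v
  seg := limSeg Λ Bs sched v
  seg_junk := by
    intro p q hnot
    rw [limSeg_zero Λ Bs sched v]
    unfold limSeg
    rw [dif_neg]
    rintro ⟨hpq, n, hn⟩
    exact hnot ⟨hpq, le_limDeg Λ Bs sched v hn⟩
  d_seg := by
    intro p q hpq hq
    obtain ⟨n, hn⟩ := exists_seq_ge Λ Bs sched v hq
    rw [limSeg_eq Λ Bs sched v hpq hn]
    exact d_sgm Λ hpq hn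
  seg_comp := by
    intro p q u hpq hqu hu
    obtain ⟨n, hn⟩ := exists_seq_ge Λ Bs sched v hu
    have hq : q ≤ Λ.d (seq Λ Bs sched v n) := le_trans hqu hn
    rw [limSeg_eq Λ Bs sched v hpq hq, limSeg_eq Λ Bs sched v hqu hn,
        limSeg_eq Λ Bs sched v (le_trans hpq hqu) hn]
    exact sgm_comp Λ hpq hqu hn
  seg_ident := by
    intro p hp
    obtain ⟨n, hn⟩ := exists_seq_ge Λ Bs sched v hp
    rw [limSeg_eq Λ Bs sched v le_rfl hn]
    exact sgm_self Λ hn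

theorem limPath_rng : (limPath Λ Bs sched v).rng = v := by
  show Λ.r (limSeg Λ Bs sched v 0 0) = v
  rw [limSeg_zero Λ Bs sched v, Λ.r_ident]

end TKGAux
namespace TKGAux

open TKG
open scoped Classical

variable {k : ℕ} {Obj Mor : Type} [TopologicalSpace Obj] [TopologicalSpace Mor]
variable (Λ : TopKGraph k Obj Mor)
variable (Bs : ℕ → Set Mor) (sched : ℕ → (Fin k → ℕ) × ℕ) (v : Obj)

theorem limPath_boundary
    (hBs : ∀ (x : Mor) (W : Set Mor), IsOpen W → x ∈ W → ∃ j, x ∈ Bs j ∧ Bs j ⊆ W ∧ IsOpen (Bs j))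
    (hsched : ∀ (t : (Fin k → ℕ) × ℕ) (N : ℕ), ∃ n, N ≤ n ∧ sched n = t) :
    IsBoundary (limPath Λ Bs sched v) := by
  intro m hdom E hE
  obtain ⟨hEcpt, hEnhds, hEexh⟩ := hE
  obtain ⟨n₀, hn₀⟩ := exists_seq_ge Λ Bs sched v hdom
  have hmn : ∀ n, n₀ ≤ n → m ≤ Λ.d (seq Λ Bs sched v n) := fun n hn =>
    le_trans hn₀ (d_seq_mono Λ Bs sched v hn)
  have hrt : ∀ n, n₀ ≤ n →
      Λ.r (fine Λ (seq Λ Bs sched v n) m) = (limPath Λ Bs sched v).vtx m := by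
    intro n hn
    have hmn' := hmn n hn
    show _ = Λ.r (limSeg Λ Bs sched v m m)
    rw [limSeg_eq Λ Bs sched v le_rfl hmn', r_sgm Λ le_rfl hmn']
  have hwE : (limPath Λ Bs sched v).vtx m ∈ Λ.r '' E := mem_of_mem_nhds hEnhds
  set S : ℕ → Set Mor := fun j =>
    {l | l ∈ E ∧ (MinExt Λ (fine Λ (seq Λ Bs sched v (n₀ + j)) m) l).Nonempty} with hSdef
  have hSne : ∀ j, (S j).Nonempty := by
    intro j
    obtain ⟨l, hlE, hme⟩ := hEexh (fine Λ (seq Λ Bs sched v (n₀ + j)) m)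
      (by rw [hrt (n₀ + j) (Nat.le_add_right _ _)]; exact hwE)
    exact ⟨l, hlE, hme⟩
  have hSanti : ∀ j, S (j + 1) ⊆ S j := by
    intro j l hl
    refine ⟨hl.1, ?_⟩
    obtain ⟨c, hc, e⟩ := seq_extends Λ Bs sched v (Nat.le_succ (n₀ + j))
    have hmj := hmn (n₀ + j) (Nat.le_add_right _ _)
    obtain ⟨h', hfe, -⟩ := fine_comp Λ hmj hc
    have hne := hl.2
    have heq : seq Λ Bs sched v (n₀ + (j + 1)) = Λ.comp (seq Λ Bs sched v (n₀ + j)) c hc := e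
    rw [heq, hfe] at hne
    exact minext_of_comp Λ h' hne
  haveI : T2Space Mor := Λ.t2Mor
  have hScl : ∀ j, closure (S j) ⊆ E := fun j =>
    closure_minimal (fun l hl => hl.1) hEcpt.isClosed
  have hVne : ∀ j, (closure (S j)).Nonempty := fun j => (hSne j).closure
  have hVcl : ∀ j, IsClosed (closure (S j)) := fun j => isClosed_closure
  have hV0 : IsCompact (closure (S 0)) := hEcpt.of_isClosed_subset (hVcl 0) (hScl 0)
  have hVanti : ∀ j, closure (S (j + 1)) ⊆ closure (S j) := fun j => closure_mono (hSanti j)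
  obtain ⟨lam, hlam⟩ := IsCompact.nonempty_iInter_of_sequence_nonempty_isCompact_isClosed
    (fun j => closure (S j)) hVanti hVne hV0 hVcl
  have hlamE : lam ∈ E := hScl 0 (mem_iInter.mp hlam 0)
  have hO : IsOpen {f : Mor | Λ.d f = Λ.d lam} := by
    have hpre : {f : Mor | Λ.d f = Λ.d lam} = Λ.d ⁻¹' {Λ.d lam} := by
      ext f; simp [Set.mem_preimage, Set.mem_singleton_iff]
    rw [hpre]
    exact IsOpen.preimage Λ.continuous_d (isOpen_discrete _)
  have key : ∀ W : Set Mor, IsOpen W → lam ∈ W →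
      ∃ l, l ∈ W ∧ Λ.d l = Λ.d lam ∧
        (∀ i, ((m + Λ.d lam) i : ℕ∞) ≤ limDeg Λ Bs sched v i) ∧
        limSeg Λ Bs sched v m (m + Λ.d lam) = l := by
    intro W hWopen hlamW
    obtain ⟨j, hjmem, hjsub, hjopen⟩ :=
      hBs lam (W ∩ {f | Λ.d f = Λ.d lam}) (hWopen.inter hO) ⟨hlamW, rfl⟩
    obtain ⟨n, hnge, hsn⟩ := hsched (m, j) n₀
    have hcl : lam ∈ closure (S (n - n₀)) := mem_iInter.mp hlam (n - n₀)
    have hnn : n₀ + (n - n₀) = n := by omega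
    have hgood : goodExt Λ (seq Λ Bs sched v n) m (Bs j) := by
      refine ⟨hmn n hnge, ?_⟩
      obtain ⟨l, hlBj, hlE, hlme⟩ := mem_closure_iff.mp hcl (Bs j) hjopen hjmem
      rw [hnn] at hlme
      exact ⟨l, hlBj, hlme⟩
    obtain ⟨l, hlBj, hble, hseg⟩ := stepF_match Λ hgood
    have hseq1 : seq Λ Bs sched v (n + 1) = stepF Λ (Bs j) m (seq Λ Bs sched v n) := by
      show stepF Λ (Bs (sched n).2) (sched n).1 _ = _
      rw [hsn]
    have hdl : Λ.d l = Λ.d lam := (hjsub hlBj).2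
    have hble' : m + Λ.d lam ≤ Λ.d (seq Λ Bs sched v (n + 1)) := by
      rw [hseq1, ← hdl]; exact hble
    refine ⟨l, (hjsub hlBj).1, hdl, le_limDeg Λ Bs sched v hble', ?_⟩
    rw [limSeg_eq Λ Bs sched v le_self_add hble', hseq1, ← hdl]
    exact hseg
  obtain ⟨l0, -, -, hdom0, -⟩ := key univ isOpen_univ (mem_univ lam)
  have htau : limSeg Λ Bs sched v m (m + Λ.d lam) = lam := by
    by_contra hne
    obtain ⟨l, hlW, -, -, hlseg⟩ := key {limSeg Λ Bs sched v m (m + Λ.d lam)}ᶜ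
      isClosed_singleton.isOpen_compl (by simpa using Ne.symm hne)
    exact hlW (Set.mem_singleton_iff.mpr hlseg.symm)
  exact ⟨lam, hlamE, hdom0, htau⟩

end TKGAux

open TKGAux

open TKG in
/-- For every vertex `v` of a topological `k`-graph, the set `v∂Λ` of boundary paths
with range `v` is nonempty. -/
theorem boundary_path_nonempty
    {k : ℕ} {Obj Mor : Type} [TopologicalSpace Obj] [TopologicalSpace Mor]
    (Λ : TopKGraph k Obj Mor) (v : Obj) :
    ∃ x : KPath Λ, IsBoundary x ∧ x.rng = v := by
  haveI := Λ.secondCountableMor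
  obtain ⟨b, hbc, -, hbasis⟩ := TopologicalSpace.exists_countable_basis Mor
  have hbne : b.Nonempty := by
    have huniv : Λ.ident v ∈ ⋃₀ b := by rw [hbasis.sUnion_eq]; exact Set.mem_univ _
    obtain ⟨B, hB, -⟩ := huniv
    exact ⟨B, hB⟩
  obtain ⟨Bs, hBseq⟩ := hbc.exists_eq_range hbne
  have hBs : ∀ (x : Mor) (W : Set Mor), IsOpen W → x ∈ W →
      ∃ j, x ∈ Bs j ∧ Bs j ⊆ W ∧ IsOpen (Bs j) := by
    intro x W hW hx
    obtain ⟨V, hVb, hxV, hVW⟩ := hbasis.exists_subset_of_mem_open hx hW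
    have hVb' : V ∈ Set.range Bs := by rw [← hBseq]; exact hVb
    obtain ⟨j, rfl⟩ := hVb'
    exact ⟨j, hxV, hVW, hbasis.isOpen hVb⟩
  obtain ⟨c, hc⟩ := exists_surjective_nat ((Fin k → ℕ) × ℕ)
  set sched : ℕ → (Fin k → ℕ) × ℕ := fun n => c (Nat.unpair n).1 with hsched_def
  have hsched : ∀ (t : (Fin k → ℕ) × ℕ) (N : ℕ), ∃ n, N ≤ n ∧ sched n = t := by
    intro t N
    obtain ⟨i, hi⟩ := hc t
    refine ⟨Nat.pair i N, Nat.right_le_pair i N, ?_⟩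
    show c (Nat.unpair (Nat.pair i N)).1 = t
    rw [Nat.unpair_pair]
    exact hi
  exact ⟨limPath Λ Bs sched v, limPath_boundary Λ Bs sched v hBs hsched,
    limPath_rng Λ Bs sched v⟩
end

section
/- The set ∂Λ of boundary paths of a topological k-graph Λ is closed in the path space X_Λ (equivalently, in the unit space of G_Λ). -/
open Set

open TKG in
/-- The boundary-path space `∂Λ` is closed in the path space `X_Λ`. -/
theorem boundary_isClosed
    {k : ℕ} {Obj Mor : Type} [TopologicalSpace Obj] [TopologicalSpace Mor]
    (Λ : TopKGraph k Obj Mor) :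
    @IsClosed (KPath Λ) (pathTopology Λ) {x | IsBoundary x} := by
  letI : TopologicalSpace (KPath Λ) := pathTopology Λ
  haveI := Λ.t2Obj
  haveI := Λ.t2Mor
  haveI := Λ.locallyCompactMor
  rw [← isOpen_compl_iff, isOpen_iff_forall_mem_open]
  intro x hx
  simp only [mem_compl_iff, mem_setOf_eq, IsBoundary] at hx
  push_neg at hx
  obtain ⟨m, hm, E, hE, hfail⟩ := hx
  obtain ⟨hEc, hEn, hEx⟩ := hE
  have h0m : (0 : Fin k → ℕ) ≤ m := fun i => Nat.zero_le _
  have hdμ₀ : Λ.d (x.seg 0 m) = m := by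
    have := x.d_seg 0 m h0m hm
    simpa using this
  obtain ⟨hμ₀s, -⟩ := x.seg_comp 0 m m h0m le_rfl hm
  have hμ₀v : Λ.s (x.seg 0 m) ∈ interior (Λ.r '' E) := by
    rw [hμ₀s]
    exact mem_interior_iff_mem_nhds.2 hEn
  set W : Set Mor := Λ.s ⁻¹' interior (Λ.r '' E) ∩ Λ.d ⁻¹' {m} with hW
  have hWopen : IsOpen W :=
    (isOpen_interior.preimage Λ.continuous_s).inter
      ((isOpen_discrete {m}).preimage Λ.continuous_d)
  have hμ₀W : x.seg 0 m ∈ W := ⟨hμ₀v, hdμ₀⟩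
  obtain ⟨K, hKn, hKW, hKc⟩ := local_compact_nhds (hWopen.mem_nhds hμ₀W)
  set P : Set (Mor × Mor) := {p | Λ.s p.1 = Λ.r p.2} with hP
  have hPc : IsClosed P :=
    isClosed_eq (Λ.continuous_s.comp continuous_fst) (Λ.continuous_r.comp continuous_snd)
  set F : Set Mor :=
    (fun p : {p : Mor × Mor // Λ.s p.1 = Λ.r p.2} => Λ.comp p.1.1 p.1.2 p.2) ''
      (Subtype.val ⁻¹' (K ×ˢ E)) with hF
  have hC : IsCompact ((K ×ˢ E) ∩ P) := (hKc.prod hEc).inter_right hPc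
  have hC' : IsCompact
      (Subtype.val ⁻¹' (K ×ˢ E) : Set {p : Mor × Mor // Λ.s p.1 = Λ.r p.2}) := by
    rw [Topology.IsEmbedding.subtypeVal.isCompact_iff, Set.image_preimage_eq_inter_range,
      Subtype.range_coe_subtype]
    exact hC
  have hFc : IsCompact F := hC'.image Λ.continuous_comp
  refine ⟨ZSet Λ (interior K) ∩ (ZSet Λ F)ᶜ, ?_, ?_, ?_, ?_⟩
  · -- subset of complement
    rintro y ⟨⟨μ, hμU, hμdom, hμseg⟩, hyF⟩
    have hμK : μ ∈ K := interior_subset hμU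
    have hμW : μ ∈ W := hKW hμK
    have hdμ : Λ.d μ = m := hμW.2
    rw [hdμ] at hμdom hμseg
    intro hb
    -- y is a boundary path; derive contradiction with hyF
    obtain ⟨hys, -⟩ := y.seg_comp 0 m m h0m le_rfl hμdom
    have hyv : Λ.r '' E ∈ nhds (y.vtx m) := by
      have : Λ.s μ ∈ interior (Λ.r '' E) := hμW.1
      rw [← hμseg, hys] at this
      exact mem_interior_iff_mem_nhds.1 this
    obtain ⟨lam, hlamE, hlamdom, hlamseg⟩ := hb m hμdom E ⟨hEc, hyv, hEx⟩
    apply hyF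
    have hmle : m ≤ m + Λ.d lam := fun i => Nat.le_add_right _ _
    obtain ⟨hcomp, heq⟩ := y.seg_comp 0 m (m + Λ.d lam) h0m hmle hlamdom
    have hmemP : (y.seg 0 m, y.seg m (m + Λ.d lam)) ∈ K ×ˢ E := by
      constructor
      · rw [hμseg]; exact hμK
      · rw [hlamseg]; exact hlamE
    refine ⟨y.seg 0 (m + Λ.d lam), ⟨⟨(y.seg 0 m, y.seg m (m + Λ.d lam)), hcomp⟩, hmemP, heq⟩, ?_, ?_⟩
    · have : Λ.d (y.seg 0 (m + Λ.d lam)) = m + Λ.d lam := by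
        have := y.d_seg 0 (m + Λ.d lam) (fun i => Nat.zero_le _) hlamdom
        simpa using this
      rw [this]; exact hlamdom
    · have : Λ.d (y.seg 0 (m + Λ.d lam)) = m + Λ.d lam := by
        have := y.d_seg 0 (m + Λ.d lam) (fun i => Nat.zero_le _) hlamdom
        simpa using this
      rw [this]
  · -- open
    exact TopologicalSpace.GenerateOpen.basic _
      ⟨interior K, F, isOpen_interior, hFc, rfl⟩
  · -- x ∈ Z(U)
    refine ⟨x.seg 0 m, mem_interior_iff_mem_nhds.2 hKn, ?_, ?_⟩
    · rw [hdμ₀]; exact hm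
    · rw [hdμ₀]
  · -- x ∉ Z(F)
    rintro ⟨f, ⟨⟨⟨μ, lam⟩, hcomp⟩, ⟨hμK, hlamE⟩, rfl⟩, hfdom, hfseg⟩
    have hdμ : Λ.d μ = m := (hKW hμK).2
    have hdf : Λ.d (Λ.comp μ lam hcomp) = m + Λ.d lam := by
      rw [Λ.d_comp, hdμ]
    rw [hdf] at hfdom hfseg
    obtain ⟨h2, heq2⟩ := x.seg_comp 0 m (m + Λ.d lam) h0m (fun i => Nat.le_add_right _ _) hfdom
    have hfac := Λ.factor (Λ.comp μ lam hcomp) m (Λ.d lam) (by rw [Λ.d_comp, hdμ])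
    obtain ⟨gh, -, huniq⟩ := hfac
    have h1 : ((μ, lam) : Mor × Mor) = gh :=
      huniq _ ⟨hcomp, rfl, hdμ, rfl⟩
    have hdx2 : Λ.d (x.seg m (m + Λ.d lam)) = Λ.d lam := by
      have := x.d_seg m (m + Λ.d lam) (fun i => Nat.le_add_right _ _) hfdom
      simpa using this
    have h2' : ((x.seg 0 m, x.seg m (m + Λ.d lam)) : Mor × Mor) = gh :=
      huniq _ ⟨h2, by rw [heq2, hfseg], hdμ₀, hdx2⟩
    have hkey : x.seg m (m + Λ.d lam) = lam := by
      have := h2'.trans h1.symm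
      exact congrArg Prod.snd this
    exact hfail lam hlamE hfdom hkey
end
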